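/- arXiv:1908.09463 — 5 statements merged into one kernel-verified Lean document; each statement's English description precedes it below -/
import Mathlib

section
/- Let k > 2 be an integer, let n = 2^k, and let G be the cyclic subgroup of (Z_n)^× generated by the unit e = 2^{k−1} − 1. For x ∈ Z_n let xG = {x·g : g ∈ G}. Then (i) the number of distinct cosets {xG : x ∈ Z_n} equals 2^{k−1} + 1, and (ii) for every nonzero a ∈ Z_n, the cardinality of {x ∈ Z_n : (x+a)G = xG} equals 2 if 2 divides a and equals 0 if 2 does not divide a; in particular the coset index function is a (2^k, 2^{k−1}+1, {0,2}) zero-difference function. -/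
/-- The coset (orbit) `xG = {x * g : g ∈ G}` of `x : R` under a subgroup `G` of `Rˣ`. -/
def coset {R : Type*} [Monoid R] (G : Subgroup Rˣ) (x : R) : Set R :=
  {y | ∃ g ∈ G, y = x * (g : R)}

private lemma zdf_two_pow_zero {k : ℕ} : ((2:ZMod (2^k)))^k = 0 := by
  have : ((2^k : ℕ) : ZMod (2^k)) = 0 := ZMod.natCast_self _
  push_cast at this; exact this

private lemma zdf_isUnit_u {k : ℕ} (hk : 2 < k) : IsUnit ((2:ZMod (2^k))^(k-2) - 1) := by
  have h1 : 1 ≤ 2^(k-2) := Nat.one_le_two_pow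
  have hcast : ((2^(k-2) - 1 : ℕ) : ZMod (2^k)) = (2:ZMod (2^k))^(k-2) - 1 := by
    push_cast [h1]; ring
  rw [← hcast, ZMod.isUnit_iff_coprime]
  apply Nat.Coprime.pow_right
  rw [Nat.coprime_two_right]
  exact Nat.Even.sub_odd h1 (by simp [Nat.even_pow]; omega) odd_one

private lemma zdf_two_mul_eq_zero {k : ℕ} (hk : 1 ≤ k) (x : ZMod (2^k)) :
    2 * x = 0 ↔ x = 0 ∨ x = 2^(k-1) := by
  haveI : NeZero (2^k) := ⟨by positivity⟩
  constructor
  · intro h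
    have hv : ((2 * x.val : ℕ) : ZMod (2^k)) = 0 := by
      push_cast [ZMod.natCast_zmod_val]; exact h
    rw [ZMod.natCast_eq_zero_iff] at hv
    have hk' : 2^k = 2 * 2^(k-1) := by
      rw [← pow_succ']; congr 1; omega
    obtain ⟨c, hc⟩ := hv
    have hc' : 2 * x.val = 2 * (2^(k-1) * c) := by rw [← mul_assoc, ← hk']; exact hc
    have hdvd : x.val = 2^(k-1) * c := Nat.eq_of_mul_eq_mul_left (by norm_num) hc'
    have hlt : x.val < 2^k := ZMod.val_lt x
    have hlt2 : 2^(k-1) * c < 2^(k-1) * 2 := by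
      rw [← hdvd, mul_comm (2^(k-1) : ℕ) 2, ← hk']; exact hlt
    have hc2 : c = 0 ∨ c = 1 := by
      have := Nat.lt_of_mul_lt_mul_left hlt2
      omega
    have hx : ((x.val : ℕ) : ZMod (2^k)) = x := ZMod.natCast_zmod_val x
    rcases hc2 with rfl | rfl
    · left; rw [← hx]; simp [hdvd]
    · right; rw [← hx, hdvd]; push_cast; ring
  · rintro (rfl | rfl)
    · ring
    · rw [← pow_succ', show k-1+1 = k from by omega]
      exact zdf_two_pow_zero

private lemma zdf_mem_zpowers_cases {M : Type*} [CommMonoid M] {e : Mˣ} (hee : e * e = 1)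
    {g : Mˣ} (hg : g ∈ Subgroup.zpowers e) : g = 1 ∨ g = e := by
  obtain ⟨n, rfl⟩ := hg
  rcases Int.even_or_odd n with ⟨m, rfl⟩ | ⟨m, rfl⟩
  · left; show e ^ (m+m) = 1; rw [zpow_add, ← mul_zpow, hee, one_zpow]
  · right; show e ^ (2*m+1) = e; rw [show (2*m+1 : ℤ) = (m+m)+1 from by ring, zpow_add,
      zpow_add, ← mul_zpow, hee, one_zpow, one_mul, zpow_one]

private lemma zdf_coset_pair {M : Type*} [CommMonoid M] {e : Mˣ} (hee : e * e = 1) (x : M) :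
    coset (Subgroup.zpowers e) x = {x, x * e} := by
  ext y
  simp only [coset, Set.mem_setOf_eq, Set.mem_insert_iff, Set.mem_singleton_iff]
  constructor
  · rintro ⟨g, hg, rfl⟩
    rcases zdf_mem_zpowers_cases hee hg with rfl | rfl
    · left; simp
    · right; rfl
  · rintro (rfl | rfl)
    · exact ⟨1, one_mem _, by simp⟩
    · exact ⟨e, Subgroup.mem_zpowers e, rfl⟩

private lemma zdf_coset_eq_iff {M : Type*} [CommMonoid M] {e : Mˣ} (hee : e * e = 1) (x y : M) :
    coset (Subgroup.zpowers e) y = coset (Subgroup.zpowers e) x ↔ y = x ∨ y = x * e := by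
  have hval : (e : M) * e = 1 := by rw [← Units.val_mul, hee, Units.val_one]
  rw [zdf_coset_pair hee, zdf_coset_pair hee]
  constructor
  · intro h
    have : y ∈ ({x, x*(e:M)} : Set M) := h ▸ (Set.mem_insert y _)
    simpa using this
  · rintro (rfl | rfl)
    · rfl
    · rw [mul_assoc, hval, mul_one, Set.pair_comm]

theorem stmt_4 (k : ℕ) (hk : 2 < k) (e : (ZMod (2 ^ k))ˣ)
    (he : (e : ZMod (2 ^ k)) = 2 ^ (k - 1) - 1) :
    {S : Set (ZMod (2 ^ k)) | ∃ x : ZMod (2 ^ k), S = coset (Subgroup.zpowers e) x}.ncard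
        = 2 ^ (k - 1) + 1 ∧
      ∀ a : ZMod (2 ^ k), a ≠ 0 →
        ((2 : ZMod (2 ^ k)) ∣ a →
          {x : ZMod (2 ^ k) |
            coset (Subgroup.zpowers e) (x + a) = coset (Subgroup.zpowers e) x}.ncard = 2) ∧
        (¬ (2 : ZMod (2 ^ k)) ∣ a →
          {x : ZMod (2 ^ k) |
            coset (Subgroup.zpowers e) (x + a) = coset (Subgroup.zpowers e) x}.ncard = 0) := by
  classical
  haveI : NeZero (2^k) := ⟨by positivity⟩
  have hk1 : 1 ≤ k := by omega
  have hpk : ((2:ZMod (2^k)))^k = 0 := zdf_two_pow_zero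
  have h2k : (2:ZMod (2^k)) * 2^(k-1) = 0 := by
    rw [← pow_succ', show k-1+1 = k from by omega]; exact hpk
  have h2k2 : (2:ZMod (2^k))^(k-1) * 2^(k-1) = 0 := by
    rw [← pow_add, show (k-1)+(k-1) = k + (k-2) from by omega, pow_add, hpk, zero_mul]
  have hval : ((e : ZMod (2^k)) * e) = 1 := by
    rw [he]
    have : ((2:ZMod (2^k))^(k-1) - 1) * (2^(k-1) - 1)
        = 2^(k-1) * 2^(k-1) - 2 * 2^(k-1) + 1 := by ring
    rw [this, h2k, h2k2, sub_zero, zero_add]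
  have hee : e * e = 1 := Units.ext (by rw [Units.val_mul, Units.val_one]; exact hval)
  have hceq : ∀ x y : ZMod (2^k),
      coset (Subgroup.zpowers e) y = coset (Subgroup.zpowers e) x ↔
        y = x ∨ y = x * (e : ZMod (2^k)) := fun x y => zdf_coset_eq_iff hee x y
  -- the unit u = 2^(k-2) - 1 and its inverse w
  set u : ZMod (2^k) := 2^(k-2) - 1 with hu
  obtain ⟨w, hw⟩ := (zdf_isUnit_u hk).exists_left_inv
  -- key : x*e - x = 2*(u*x)
  have h22 : (2:ZMod (2^k)) * 2^(k-2) = 2^(k-1) := by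
    rw [← pow_succ', show k-2+1 = k-1 from by omega]
  have key : ∀ x : ZMod (2^k), x * (e : ZMod (2^k)) - x = 2 * (u * x) := by
    intro x
    rw [he, hu, ← h22]; ring
  have hneg : -(2:ZMod (2^k))^(k-1) = 2^(k-1) := by
    rw [neg_eq_iff_add_eq_zero, ← two_mul]; exact h2k
  have hhne : (2:ZMod (2^k))^(k-1) ≠ 0 := by
    have : ¬ (2^k ∣ 2^(k-1)) := by
      intro hdvd
      have := Nat.le_of_dvd (by positivity) hdvd
      have h2 : (2:ℕ)^(k-1) < 2^k := Nat.pow_lt_pow_right (by norm_num) (by omega)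
      omega
    intro hcon
    apply this
    rw [← ZMod.natCast_eq_zero_iff]
    push_cast
    exact hcon
  have huh : u * 2^(k-1) = 2^(k-1) := by
    have h0 : (2:ZMod (2^k))^(k-2) * 2^(k-1) = 0 := by
      rw [← pow_add, show (k-2)+(k-1) = k + (k-3) from by omega, pow_add, hpk, zero_mul]
    have : u * 2^(k-1) = 2^(k-2) * 2^(k-1) - 2^(k-1) := by rw [hu]; ring
    rw [this, h0, zero_sub, hneg]
  have hwh : w * 2^(k-1) = 2^(k-1) := by
    conv_lhs => rw [← huh, ← mul_assoc, hw, one_mul]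
  have hxw : ∀ x : ZMod (2^k), w * (u * x) = x := by
    intro x; rw [← mul_assoc, hw, one_mul]
  have hfix : ∀ x : ZMod (2^k), x * (e : ZMod (2^k)) = x ↔ x = 0 ∨ x = 2^(k-1) := by
    intro x
    rw [← sub_eq_zero, key x, zdf_two_mul_eq_zero hk1]
    constructor
    · rintro (h | h)
      · left; rw [← hxw x, h, mul_zero]
      · right; rw [← hxw x, h, hwh]
    · rintro (rfl | rfl)
      · left; rw [mul_zero]
      · right; rw [huh]
  constructor
  · -- number of cosets
    have hset : {S : Set (ZMod (2^k)) | ∃ x, S = coset (Subgroup.zpowers e) x}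
        = ↑(Finset.image (fun x => coset (Subgroup.zpowers e) x) Finset.univ) := by
      ext S
      simp only [Set.mem_setOf_eq, Finset.coe_image, Finset.coe_univ, Set.image_univ,
        Set.mem_range]
      exact ⟨fun ⟨x, hx⟩ => ⟨x, hx.symm⟩, fun ⟨x, hx⟩ => ⟨x, hx.symm⟩⟩
    rw [hset, Set.ncard_coe_finset]
    set T := Finset.image (fun x => coset (Subgroup.zpowers e) x) Finset.univ with hT
    have hfiber : ∀ x : ZMod (2^k),
        Finset.univ.filter (fun y => coset (Subgroup.zpowers e) y
          = coset (Subgroup.zpowers e) x) = {x, x * (e : ZMod (2^k))} := by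
      intro x
      ext y
      simp only [Finset.mem_filter, Finset.mem_univ, true_and, Finset.mem_insert,
        Finset.mem_singleton]
      exact hceq x y
    set T₀ : Finset (Set (ZMod (2^k))) :=
      {coset (Subgroup.zpowers e) 0, coset (Subgroup.zpowers e) (2^(k-1))} with hT₀
    have hne01 : coset (Subgroup.zpowers e) ((2:ZMod (2^k))^(k-1))
        ≠ coset (Subgroup.zpowers e) 0 := by
      intro hcon
      rcases (hceq 0 (2^(k-1))).mp hcon with h | h
      · exact hhne h
      · rw [zero_mul] at h; exact hhne h
    have hT₀card : T₀.card = 2 := by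
      rw [hT₀, Finset.card_insert_of_notMem (by simpa using (Ne.symm hne01)),
        Finset.card_singleton]
    have hT₀sub : T₀ ⊆ T := by
      intro C hC
      rw [hT₀] at hC
      rcases Finset.mem_insert.mp hC with rfl | hC
      · exact Finset.mem_image.mpr ⟨0, Finset.mem_univ _, rfl⟩
      · rw [Finset.mem_singleton] at hC
        exact hC ▸ Finset.mem_image.mpr ⟨2^(k-1), Finset.mem_univ _, rfl⟩
    have hcard_univ := Finset.card_eq_sum_card_image
      (fun x => coset (Subgroup.zpowers e) x) (Finset.univ : Finset (ZMod (2^k)))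
    rw [Finset.card_univ, ZMod.card] at hcard_univ
    rw [← Finset.sum_sdiff hT₀sub] at hcard_univ
    -- sum over T₀ is 2
    have hsum0 : ∑ C ∈ T₀, (Finset.univ.filter
        (fun a => coset (Subgroup.zpowers e) a = C)).card = 2 := by
      rw [hT₀, Finset.sum_insert (by simpa using (Ne.symm hne01)), Finset.sum_singleton,
        hfiber 0, hfiber (2^(k-1))]
      rw [zero_mul, (hfix (2^(k-1))).mpr (Or.inr rfl)]
      simp
    -- sum over T \ T₀ : each fiber has size 2
    have hsum1 : ∑ C ∈ T \ T₀, (Finset.univ.filter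
        (fun a => coset (Subgroup.zpowers e) a = C)).card = 2 * (T \ T₀).card := by
      rw [Finset.sum_congr rfl (fun C hC => ?_), Finset.sum_const, smul_eq_mul, mul_comm]
      rw [Finset.mem_sdiff] at hC
      obtain ⟨hCT, hCT₀⟩ := hC
      obtain ⟨x, _, rfl⟩ := Finset.mem_image.mp hCT
      rw [hfiber x]
      have hxe : x * (e : ZMod (2^k)) ≠ x := by
        intro hcon
        rcases (hfix x).mp hcon with rfl | rfl
        · exact hCT₀ (by rw [hT₀]; exact Finset.mem_insert_self _ _)
        · exact hCT₀ (by rw [hT₀]; simp)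
      rw [Finset.card_insert_of_notMem (by simpa using (Ne.symm hxe)),
        Finset.card_singleton]
    rw [hsum0, hsum1] at hcard_univ
    have hcard_sdiff : (T \ T₀).card = T.card - 2 := by
      rw [Finset.card_sdiff_of_subset hT₀sub, hT₀card]
    have hTle : 2 ≤ T.card := by
      have h := Finset.card_le_card hT₀sub
      omega
    have hpow : (2:ℕ)^k = 2 * 2^(k-1) := by
      rw [← pow_succ']; congr 1; omega
    omega
  · -- the ZDF property
    intro a ha
    have hsetA : {x : ZMod (2^k) | coset (Subgroup.zpowers e) (x + a)
        = coset (Subgroup.zpowers e) x} = {x : ZMod (2^k) | 2 * (u * x) = a} := by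
      ext x
      rw [Set.mem_setOf_eq, hceq x (x+a), Set.mem_setOf_eq]
      constructor
      · rintro (h | h)
        · exact absurd (add_eq_left.mp h) ha
        · have : a = x * (e : ZMod (2^k)) - x := by rw [← h]; ring
          rw [this, ← key x]
      · intro h
        right
        have hx : x * (e : ZMod (2^k)) - x = a := by rw [key x, h]
        rw [← hx]; ring
    constructor
    · rintro ⟨b, hb⟩
      rw [hsetA]
      have hpair : {x : ZMod (2^k) | 2 * (u * x) = a}
          = {w * b, w * b + 2^(k-1)} := by
        ext x
        simp only [Set.mem_setOf_eq, Set.mem_insert_iff, Set.mem_singleton_iff]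
        rw [hb]
        constructor
        · intro hx
          have h0 : 2 * (u * x - b) = 0 := by rw [mul_sub, hx, sub_self]
          rcases (zdf_two_mul_eq_zero hk1 _).mp h0 with h1 | h1
          · left
            rw [sub_eq_zero] at h1
            rw [← hxw x, h1]
          · right
            rw [sub_eq_iff_eq_add] at h1
            rw [← hxw x, h1, mul_add, hwh]
            ring
        · have hub : u * (w * b) = b := by rw [← mul_assoc, mul_comm u w, hw, one_mul]
          rintro (rfl | rfl)
          · rw [hub]
          · rw [mul_add, hub, huh, mul_add, h2k, add_zero]
      rw [hpair, Set.ncard_pair]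
      intro hcon
      exact hhne (left_eq_add.mp hcon)
    · intro hnd
      rw [hsetA]
      have : {x : ZMod (2^k) | 2 * (u * x) = a} = ∅ := by
        ext x
        simp only [Set.mem_setOf_eq, Set.mem_empty_iff_false, iff_false]
        intro hx
        exact hnd ⟨u * x, hx.symm⟩
      rw [this, Set.ncard_empty]
end

section
/- Let p be an odd prime, let n = p², and let G be the cyclic subgroup of (Z_n)^× generated by the unit e = p − 1. For x ∈ Z_n let xG = {x·g : g ∈ G}. Then (i) the number of distinct cosets {xG : x ∈ Z_n} equals p, and (ii) for every nonzero α ∈ Z_n, the cardinality of {x ∈ Z_n : (x+α)G = xG} equals p² − p + 1 if p divides α and equals p if p does not divide α; in particular the coset index function is a (p², p, {p, p²−p+1}) zero-difference function. -/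
section
variable {p : ℕ} (hp : p.Prime)

/-- the reduction map ZMod p² → ZMod p -/
noncomputable def phi (p : ℕ) : ZMod (p ^ 2) →+* ZMod p :=
  ZMod.castHom (dvd_pow_self p (by norm_num)) (ZMod p)

lemma dvd_iff_val (hp : p.Prime) (x : ZMod (p ^ 2)) :
    (p : ZMod (p ^ 2)) ∣ x ↔ p ∣ x.val := by
  haveI : NeZero (p ^ 2) := ⟨pow_ne_zero 2 hp.ne_zero⟩
  constructor
  · rintro ⟨z, rfl⟩
    have : ((p : ZMod (p ^ 2)) * z).val = (p * z.val) % p ^ 2 := by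
      rw [ZMod.val_mul, ZMod.val_natCast]
      congr 1
      rw [Nat.mod_eq_of_lt (by nlinarith [hp.two_le])]
    rw [this]
    rw [Nat.dvd_mod_iff (dvd_pow_self p (by norm_num))]
    exact Dvd.intro _ rfl
  · rintro ⟨c, hc⟩
    refine ⟨(c : ZMod (p ^ 2)), ?_⟩
    have : ((x.val : ℕ) : ZMod (p ^ 2)) = x := ZMod.natCast_rightInverse x
    rw [← this, hc]
    push_cast
    ring
end

section
variable {p : ℕ}

lemma phi_apply (hp : p.Prime) (x : ZMod (p ^ 2)) : phi p x = (x.val : ZMod p) := by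
  haveI : NeZero (p ^ 2) := ⟨pow_ne_zero 2 hp.ne_zero⟩
  rw [phi, ZMod.castHom_apply, ← ZMod.natCast_val]

lemma phi_eq_zero_iff (hp : p.Prime) (x : ZMod (p ^ 2)) :
    phi p x = 0 ↔ (p : ZMod (p ^ 2)) ∣ x := by
  haveI : NeZero p := ⟨hp.ne_zero⟩
  rw [phi_apply hp, ZMod.natCast_eq_zero_iff, dvd_iff_val hp]

lemma phi_eq_iff (hp : p.Prime) (x y : ZMod (p ^ 2)) :
    phi p x = phi p y ↔ (p : ZMod (p ^ 2)) ∣ (x - y) := by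
  rw [← phi_eq_zero_iff hp, map_sub, sub_eq_zero]

lemma mul_p_eq_zero_iff (hp : p.Prime) (x : ZMod (p ^ 2)) :
    (p : ZMod (p ^ 2)) * x = 0 ↔ phi p x = 0 := by
  haveI : NeZero (p ^ 2) := ⟨pow_ne_zero 2 hp.ne_zero⟩
  rw [phi_eq_zero_iff hp]
  constructor
  · intro h
    have hv : (p * x.val) % p ^ 2 = 0 := by
      have : ((p * x.val : ℕ) : ZMod (p ^ 2)) = 0 := by
        push_cast
        rw [ZMod.natCast_rightInverse x]
        exact h
      rwa [ZMod.natCast_eq_zero_iff, Nat.dvd_iff_mod_eq_zero] at this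
    have hdvd : p ^ 2 ∣ p * x.val := Nat.dvd_of_mod_eq_zero hv
    have : p ∣ x.val := by
      rcases hdvd with ⟨c, hc⟩
      refine ⟨c, ?_⟩
      have hp0 : 0 < p := hp.pos
      nlinarith [hc]
    rw [dvd_iff_val hp]
    exact this
  · rintro ⟨z, rfl⟩
    rw [← mul_assoc, ← Nat.cast_mul, ← sq, ZMod.natCast_self, zero_mul]

lemma mul_p_eq_iff (hp : p.Prime) (x y : ZMod (p ^ 2)) :
    (p : ZMod (p ^ 2)) * x = (p : ZMod (p ^ 2)) * y ↔ phi p x = phi p y := by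
  rw [← sub_eq_zero, ← mul_sub, mul_p_eq_zero_iff hp, map_sub, sub_eq_zero]

lemma p_sq_zero : ((p : ZMod (p ^ 2)))^2 = 0 := by
  rw [← Nat.cast_pow, ZMod.natCast_self]

lemma e_sq (e : (ZMod (p ^ 2))ˣ) (he : (e : ZMod (p ^ 2)) = (p : ZMod (p ^ 2)) - 1) :
    ((e : ZMod (p ^ 2)))^2 = 1 - 2 * p := by
  have h0 := p_sq_zero (p := p)
  rw [he]
  ring_nf
  rw [h0]
  ring

lemma e_pow_even (e : (ZMod (p ^ 2))ˣ) (he : (e : ZMod (p ^ 2)) = (p : ZMod (p ^ 2)) - 1)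
    (k : ℕ) : ((e ^ (2 * k) : (ZMod (p ^ 2))ˣ) : ZMod (p ^ 2)) = 1 - 2 * k * p := by
  induction k with
  | zero => simp
  | succ n ih =>
    have h2 : 2 * (n + 1) = 2 * n + 2 := by ring
    rw [h2, pow_add, Units.val_mul, ih, Units.val_pow_eq_pow_val, e_sq e he]
    have h0 := p_sq_zero (p := p)
    push_cast
    ring_nf
    rw [h0]
    ring

lemma phi_e (e : (ZMod (p ^ 2))ˣ) (he : (e : ZMod (p ^ 2)) = (p : ZMod (p ^ 2)) - 1) :
    phi p (e : ZMod (p ^ 2)) = -1 := by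
  rw [he, map_sub, map_one, map_natCast, ZMod.natCast_self, zero_sub]

lemma two_nz (hp : p.Prime) (hodd : p ≠ 2) : (2 : ZMod p) ≠ 0 := by
  haveI : NeZero p := ⟨hp.ne_zero⟩
  intro h
  rw [show ((2:ZMod p)) = ((2:ℕ):ZMod p) by push_cast; ring,
    ZMod.natCast_eq_zero_iff] at h
  have := (Nat.prime_dvd_prime_iff_eq hp (by norm_num)).mp h
  exact hodd this

lemma mem_zpowers_iff (hp : p.Prime) (hodd : p ≠ 2) (e : (ZMod (p ^ 2))ˣ)
    (he : (e : ZMod (p ^ 2)) = (p : ZMod (p ^ 2)) - 1) (u : (ZMod (p ^ 2))ˣ) :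
    u ∈ Subgroup.zpowers e ↔ phi p (u : ZMod (p ^ 2)) = 1 ∨ phi p (u : ZMod (p ^ 2)) = -1 := by
  haveI : NeZero p := ⟨hp.ne_zero⟩
  haveI : Fact p.Prime := ⟨hp⟩
  set Φ : (ZMod (p ^ 2))ˣ →* (ZMod p)ˣ := Units.map (phi p : ZMod (p ^ 2) →* ZMod p) with hΦ
  have hΦ_apply : ∀ v : (ZMod (p ^ 2))ˣ, ((Φ v : (ZMod p)ˣ) : ZMod p) = phi p (v : ZMod (p ^ 2)) := by
    intro v; rfl
  have hΦe : Φ e = -1 := by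
    apply Units.ext
    rw [hΦ_apply, phi_e e he, Units.val_neg, Units.val_one]
  constructor
  · rintro ⟨z, rfl⟩
    have hmap : Φ (e ^ z) = (-1 : (ZMod p)ˣ) ^ z := by rw [map_zpow, hΦe]
    rcases Int.even_or_odd z with ⟨m, hm⟩ | ⟨m, hm⟩
    · left
      have : (-1 : (ZMod p)ˣ) ^ z = 1 := by
        rw [hm, show m + m = 2 * m by ring, zpow_mul, zpow_two, neg_one_mul, neg_neg, one_zpow]
      rw [← hΦ_apply, hmap, this, Units.val_one]
    · right
      have : (-1 : (ZMod p)ˣ) ^ z = -1 := by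
        rw [hm, zpow_add, zpow_mul, zpow_two, neg_one_mul, neg_neg, one_zpow, zpow_one, one_mul]
      rw [← hΦ_apply, hmap, this, Units.val_neg, Units.val_one]
  · have key : ∀ v : (ZMod (p ^ 2))ˣ, phi p (v : ZMod (p ^ 2)) = 1 → v ∈ Subgroup.zpowers e := by
      intro v hv
      have h0 : phi p ((v : ZMod (p ^ 2)) - 1) = 0 := by rw [map_sub, map_one, hv, sub_self]
      rw [phi_eq_zero_iff hp] at h0
      rcases h0 with ⟨s, hs⟩
      set k : ℕ := ((-(phi p s)) * (2 : ZMod p)⁻¹).val with hk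
      have hkc : ((k : ℕ) : ZMod p) = (-(phi p s)) * (2 : ZMod p)⁻¹ := ZMod.natCast_rightInverse _
      have hval : ((e ^ (2 * k) : (ZMod (p ^ 2))ˣ) : ZMod (p ^ 2)) = (v : ZMod (p ^ 2)) := by
        rw [e_pow_even e he]
        have hv1 : (v : ZMod (p ^ 2)) = 1 + p * s := by
          have := hs.symm
          linear_combination hs
        rw [hv1]
        have : (p : ZMod (p ^ 2)) * (-(2 * k)) = (p : ZMod (p ^ 2)) * s := by
          rw [mul_p_eq_iff hp]
          have : phi p (-(2 * (k : ZMod (p ^ 2)))) = -(2 * ((k : ℕ) : ZMod p)) := by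
            rw [map_neg, map_mul, map_natCast, map_ofNat]
          rw [this, hkc]
          field_simp [two_nz hp hodd]
        linear_combination this
      exact Subgroup.mem_zpowers_iff.mpr ⟨((2 * k : ℕ) : ℤ),
        by rw [zpow_natCast]; apply Units.ext; exact hval⟩
    rintro (h1 | h2)
    · exact key u h1
    · have : phi p ((u * e : (ZMod (p ^ 2))ˣ) : ZMod (p ^ 2)) = 1 := by
        rw [Units.val_mul, map_mul, h2, phi_e e he]
        ring
      have hmem := key (u * e) this
      have : u = (u * e) * e⁻¹ := by group
      rw [this]
      exact mul_mem hmem (inv_mem (Subgroup.mem_zpowers e))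

end

section CosetLemmas
variable {R : Type*} [CommMonoid R] (G : Subgroup Rˣ)

lemma coset_mul_mem (x : R) (g : Rˣ) (hg : g ∈ G) : coset G (x * (g : R)) = coset G x := by
  ext y
  constructor
  · rintro ⟨h, hh, rfl⟩
    exact ⟨g * h, mul_mem hg hh, by rw [Units.val_mul, mul_assoc]⟩
  · rintro ⟨h, hh, rfl⟩
    refine ⟨g⁻¹ * h, mul_mem (inv_mem hg) hh, ?_⟩
    rw [Units.val_mul, ← mul_assoc, mul_assoc x, Units.mul_inv, mul_one]

lemma coset_eq_iff (x y : R) :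
    coset G y = coset G x ↔ ∃ g ∈ G, y = x * (g : R) := by
  constructor
  · intro h
    have : y ∈ coset G y := ⟨1, one_mem G, by simp⟩
    rw [h] at this
    exact this
  · rintro ⟨g, hg, rfl⟩
    exact coset_mul_mem G x g hg

lemma coset_zero {R : Type*} [CommMonoidWithZero R] (G : Subgroup Rˣ) :
    coset G (0 : R) = {0} := by
  ext y
  simp only [coset, Set.mem_setOf_eq, Set.mem_singleton_iff]
  constructor
  · rintro ⟨g, _, rfl⟩; simp
  · rintro rfl; exact ⟨1, one_mem G, by simp⟩

end CosetLemmas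

section Action
variable {p : ℕ}

lemma mul_g_of_p_dvd (hp : p.Prime) (hodd : p ≠ 2) (e : (ZMod (p ^ 2))ˣ)
    (he : (e : ZMod (p ^ 2)) = (p : ZMod (p ^ 2)) - 1)
    (x : ZMod (p ^ 2)) (hx : (p : ZMod (p ^ 2)) ∣ x) (g : (ZMod (p ^ 2))ˣ)
    (hg : g ∈ Subgroup.zpowers e) : x * (g : ZMod (p ^ 2)) = x ∨ x * (g : ZMod (p ^ 2)) = -x := by
  rcases hx with ⟨t, rfl⟩
  rcases (mem_zpowers_iff hp hodd e he g).mp hg with h1 | h2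
  · left
    have h0 : phi p ((g : ZMod (p ^ 2)) - 1) = 0 := by rw [map_sub, map_one, h1, sub_self]
    rw [phi_eq_zero_iff hp] at h0
    rcases h0 with ⟨s, hs⟩
    have hg1 : (g : ZMod (p ^ 2)) = 1 + p * s := by linear_combination hs
    rw [hg1]
    have h0 := p_sq_zero (p := p)
    linear_combination t * s * h0
  · right
    have h0 : phi p ((g : ZMod (p ^ 2)) + 1) = 0 := by rw [map_add, map_one, h2]; ring
    rw [phi_eq_zero_iff hp] at h0
    rcases h0 with ⟨s, hs⟩
    have hg1 : (g : ZMod (p ^ 2)) = -1 + p * s := by linear_combination hs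
    rw [hg1]
    have h0 := p_sq_zero (p := p)
    linear_combination t * s * h0

end Action

section Counting
variable {p : ℕ}

lemma card_dvd_set (hp : p.Prime) :
    {x : ZMod (p ^ 2) | (p : ZMod (p ^ 2)) ∣ x}.ncard = p := by
  haveI : NeZero p := ⟨hp.ne_zero⟩
  haveI : NeZero (p ^ 2) := ⟨pow_ne_zero 2 hp.ne_zero⟩
  set f : ZMod p → ZMod (p ^ 2) := fun k => (p : ZMod (p ^ 2)) * (k.val : ZMod (p ^ 2)) with hf
  have hinj : Function.Injective f := by
    intro k k' h
    rw [hf] at h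
    simp only at h
    rw [mul_p_eq_iff hp, map_natCast, map_natCast] at h
    rwa [ZMod.natCast_rightInverse k, ZMod.natCast_rightInverse k'] at h
  have hrange : {x : ZMod (p ^ 2) | (p : ZMod (p ^ 2)) ∣ x} = Set.range f := by
    ext x
    simp only [Set.mem_setOf_eq, Set.mem_range]
    constructor
    · rintro ⟨z, rfl⟩
      refine ⟨phi p z, ?_⟩
      rw [hf]
      simp only
      rw [mul_p_eq_iff hp, map_natCast, ZMod.natCast_rightInverse]
    · rintro ⟨k, rfl⟩
      exact ⟨(k.val : ZMod (p ^ 2)), rfl⟩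
  rw [hrange, ← Set.image_univ, Set.ncard_image_of_injective _ hinj, Set.ncard_univ,
    Nat.card_zmod]

lemma card_not_dvd_set (hp : p.Prime) :
    {x : ZMod (p ^ 2) | ¬ (p : ZMod (p ^ 2)) ∣ x}.ncard = p ^ 2 - p := by
  haveI : NeZero (p ^ 2) := ⟨pow_ne_zero 2 hp.ne_zero⟩
  have h1 : {x : ZMod (p ^ 2) | ¬ (p : ZMod (p ^ 2)) ∣ x}
      = {x : ZMod (p ^ 2) | (p : ZMod (p ^ 2)) ∣ x}ᶜ := by
    ext x; simp
  rw [h1]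
  have h2 := Set.ncard_add_ncard_compl {x : ZMod (p ^ 2) | (p : ZMod (p ^ 2)) ∣ x}
  rw [card_dvd_set hp] at h2
  have h3 : Nat.card (ZMod (p ^ 2)) = p ^ 2 := Nat.card_zmod _
  omega

lemma isUnit_iff_not_dvd (hp : p.Prime) (x : ZMod (p ^ 2)) :
    IsUnit x ↔ ¬ (p : ZMod (p ^ 2)) ∣ x := by
  haveI : NeZero (p ^ 2) := ⟨pow_ne_zero 2 hp.ne_zero⟩
  rw [dvd_iff_val hp]
  have hx : ((x.val : ℕ) : ZMod (p ^ 2)) = x := ZMod.natCast_rightInverse x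
  rw [← hx, ZMod.isUnit_iff_coprime]
  rw [Nat.coprime_pow_right_iff (by norm_num)]
  rw [Nat.coprime_comm]
  rw [hp.coprime_iff_not_dvd]
  rw [ZMod.val_natCast_of_lt (ZMod.val_lt x)]

end Counting

section Fibers
variable {p : ℕ}

lemma phi_x_ne_zero_of_unit (hp : p.Prime) (X : (ZMod (p ^ 2))ˣ) :
    phi p (X : ZMod (p ^ 2)) ≠ 0 := by
  haveI : Fact p.Prime := ⟨hp⟩
  intro h
  have h1 : phi p ((X : ZMod (p ^ 2)) * ((X⁻¹ : (ZMod (p ^ 2))ˣ) : ZMod (p ^ 2))) = 0 := by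
    rw [map_mul, h, zero_mul]
  rw [Units.mul_inv, map_one] at h1
  exact one_ne_zero h1

lemma neg_one_mem (hp : p.Prime) (hodd : p ≠ 2) (e : (ZMod (p ^ 2))ˣ)
    (he : (e : ZMod (p ^ 2)) = (p : ZMod (p ^ 2)) - 1) :
    (-1 : (ZMod (p ^ 2))ˣ) ∈ Subgroup.zpowers e := by
  rw [mem_zpowers_iff hp hodd e he]
  right
  rw [Units.val_neg, Units.val_one, map_neg, map_one]

lemma p_dvd_of_p_dvd_two_mul (hp : p.Prime) (hodd : p ≠ 2) (x : ZMod (p ^ 2))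
    (h : (p : ZMod (p ^ 2)) ∣ 2 * x) : (p : ZMod (p ^ 2)) ∣ x := by
  haveI : Fact p.Prime := ⟨hp⟩
  rw [← phi_eq_zero_iff hp] at h ⊢
  rw [map_mul, map_ofNat] at h
  rcases mul_eq_zero.mp h with h2 | hx
  · exact absurd h2 (two_nz hp hodd)
  · exact hx

lemma unit_coset_step (hp : p.Prime) (x α : ZMod (p ^ 2)) (X Y : (ZMod (p ^ 2))ˣ)
    (hX : (X : ZMod (p ^ 2)) = x) (hY : (Y : ZMod (p ^ 2)) = x + α) :
    x + α = x * ((X⁻¹ * Y : (ZMod (p ^ 2))ˣ) : ZMod (p ^ 2)) := by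
  rw [← hY, ← hX, Units.val_mul, ← mul_assoc, Units.mul_inv, one_mul]

lemma phi_quot (hp : p.Prime) (x α : ZMod (p ^ 2)) (X Y : (ZMod (p ^ 2))ˣ)
    (hX : (X : ZMod (p ^ 2)) = x) (hY : (Y : ZMod (p ^ 2)) = x + α) :
    phi p ((X⁻¹ * Y : (ZMod (p ^ 2))ˣ) : ZMod (p ^ 2)) * phi p x = phi p (x + α) := by
  rw [← map_mul]
  have h1 : ((X⁻¹ * Y : (ZMod (p ^ 2))ˣ) : ZMod (p ^ 2)) * x
      = (((X⁻¹ : (ZMod (p ^ 2))ˣ) : ZMod (p ^ 2)) * (X : ZMod (p ^ 2))) * (x + α) := by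
    rw [Units.val_mul, hY, hX]
    ring
  rw [h1, Units.inv_mul, one_mul]

lemma fiber_case_dvd (hp : p.Prime) (hodd : p ≠ 2) (e : (ZMod (p ^ 2))ˣ)
    (he : (e : ZMod (p ^ 2)) = (p : ZMod (p ^ 2)) - 1)
    (α : ZMod (p ^ 2)) (hα : α ≠ 0) (hdvd : (p : ZMod (p ^ 2)) ∣ α) :
    {x : ZMod (p ^ 2) | coset (Subgroup.zpowers e) (x + α) = coset (Subgroup.zpowers e) x}
      = {x : ZMod (p ^ 2) | ¬ (p : ZMod (p ^ 2)) ∣ x} ∪ {x : ZMod (p ^ 2) | 2 * x + α = 0} := by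
  haveI : Fact p.Prime := ⟨hp⟩
  ext x
  simp only [Set.mem_setOf_eq, Set.mem_union]
  rw [coset_eq_iff]
  constructor
  · rintro ⟨g, hg, hxg⟩
    by_cases hx : (p : ZMod (p ^ 2)) ∣ x
    · right
      rcases mul_g_of_p_dvd hp hodd e he x hx g hg with h1 | h2
      · exfalso; apply hα; linear_combination hxg + h1
      · linear_combination hxg + h2
    · left; exact hx
  · rintro (hx | hx)
    · obtain ⟨X, hX⟩ := (isUnit_iff_not_dvd hp x).mpr hx
      have hxa : ¬ (p : ZMod (p ^ 2)) ∣ (x + α) := by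
        intro h
        apply hx
        have h2 := dvd_sub h hdvd
        rwa [add_sub_cancel_right] at h2
      obtain ⟨Y, hY⟩ := (isUnit_iff_not_dvd hp (x + α)).mpr hxa
      refine ⟨X⁻¹ * Y, ?_, unit_coset_step hp x α X Y hX hY⟩
      rw [mem_zpowers_iff hp hodd e he]
      left
      have hcalc := phi_quot hp x α X Y hX hY
      have hα0 : phi p α = 0 := (phi_eq_zero_iff hp α).mpr hdvd
      rw [map_add, hα0, add_zero] at hcalc
      have hxne := phi_x_ne_zero_of_unit hp X
      rw [hX] at hxne
      exact mul_right_cancel₀ hxne (by rw [one_mul]; exact hcalc)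
    · refine ⟨-1, neg_one_mem hp hodd e he, ?_⟩
      rw [Units.val_neg, Units.val_one]
      linear_combination hx

lemma fiber_case_not_dvd (hp : p.Prime) (hodd : p ≠ 2) (e : (ZMod (p ^ 2))ˣ)
    (he : (e : ZMod (p ^ 2)) = (p : ZMod (p ^ 2)) - 1)
    (α : ZMod (p ^ 2)) (hndvd : ¬ (p : ZMod (p ^ 2)) ∣ α) :
    {x : ZMod (p ^ 2) | coset (Subgroup.zpowers e) (x + α) = coset (Subgroup.zpowers e) x}
      = {x : ZMod (p ^ 2) | (p : ZMod (p ^ 2)) ∣ 2 * x + α} := by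
  haveI : Fact p.Prime := ⟨hp⟩
  ext x
  simp only [Set.mem_setOf_eq]
  rw [coset_eq_iff]
  constructor
  · rintro ⟨g, hg, hxg⟩
    by_cases hx : (p : ZMod (p ^ 2)) ∣ x
    · exfalso
      rcases mul_g_of_p_dvd hp hodd e he x hx g hg with h1 | h2
      · apply hndvd
        have hα0 : α = 0 := by linear_combination hxg + h1
        rw [hα0]
        exact dvd_zero _
      · apply hndvd
        have hα2 : α = -(2 * x) := by linear_combination hxg + h2
        rw [hα2]
        exact dvd_neg.mpr (hx.mul_left 2)
    · rcases (mem_zpowers_iff hp hodd e he g).mp hg with h1 | h2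
      · exfalso
        apply hndvd
        rw [← phi_eq_zero_iff hp]
        have hpr : phi p (x + α) = phi p x * phi p (g : ZMod (p ^ 2)) := by
          rw [← map_mul, ← hxg]
        rw [h1, mul_one, map_add] at hpr
        linear_combination hpr
      · rw [← phi_eq_zero_iff hp]
        have hpr : phi p (x + α) = phi p x * phi p (g : ZMod (p ^ 2)) := by
          rw [← map_mul, ← hxg]
        rw [h2, map_add] at hpr
        rw [map_add, map_mul, map_ofNat]
        linear_combination hpr
  · intro h
    have hx : ¬ (p : ZMod (p ^ 2)) ∣ x := by
      intro hx
      apply hndvd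
      have h2 := dvd_sub h (hx.mul_left 2)
      rwa [add_sub_cancel_left] at h2
    have hxa : ¬ (p : ZMod (p ^ 2)) ∣ (x + α) := by
      intro hxa
      apply hx
      have h2 := dvd_sub h hxa
      rwa [show 2 * x + α - (x + α) = x by ring] at h2
    obtain ⟨X, hX⟩ := (isUnit_iff_not_dvd hp x).mpr hx
    obtain ⟨Y, hY⟩ := (isUnit_iff_not_dvd hp (x + α)).mpr hxa
    refine ⟨X⁻¹ * Y, ?_, unit_coset_step hp x α X Y hX hY⟩
    rw [mem_zpowers_iff hp hodd e he]
    right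
    have hcalc := phi_quot hp x α X Y hX hY
    have hphi : phi p (x + α) = - phi p x := by
      have h0 : phi p (2 * x + α) = 0 := (phi_eq_zero_iff hp _).mpr h
      rw [map_add, map_mul, map_ofNat] at h0
      rw [map_add]
      linear_combination h0
    rw [hphi] at hcalc
    have hxne := phi_x_ne_zero_of_unit hp X
    rw [hX] at hxne
    exact mul_right_cancel₀ hxne (by rw [neg_one_mul]; exact hcalc)

end Fibers

section FiberCards
variable {p : ℕ}

lemma two_unit (hp : p.Prime) (hodd : p ≠ 2) : IsUnit (2 : ZMod (p ^ 2)) := by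
  rw [isUnit_iff_not_dvd hp]
  intro hd
  apply two_nz hp hodd
  have := (phi_eq_zero_iff hp (2 : ZMod (p ^ 2))).mpr hd
  rwa [map_ofNat] at this

lemma fiber_card_dvd (hp : p.Prime) (hodd : p ≠ 2)
    (α : ZMod (p ^ 2)) (hdvd : (p : ZMod (p ^ 2)) ∣ α) :
    ({x : ZMod (p ^ 2) | ¬ (p : ZMod (p ^ 2)) ∣ x}
      ∪ {x : ZMod (p ^ 2) | 2 * x + α = 0}).ncard = p ^ 2 - p + 1 := by
  obtain ⟨U, hU⟩ := two_unit hp hodd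
  haveI : NeZero (p ^ 2) := ⟨pow_ne_zero 2 hp.ne_zero⟩
  have hUU : ∀ z : ZMod (p ^ 2), 2 * (((U⁻¹ : (ZMod (p ^ 2))ˣ) : ZMod (p ^ 2)) * z) = z := by
    intro z
    rw [← mul_assoc, ← hU, Units.mul_inv, one_mul]
  set x₀ : ZMod (p ^ 2) := ((U⁻¹ : (ZMod (p ^ 2))ˣ) : ZMod (p ^ 2)) * (-α) with hx₀
  have hsol : ∀ x : ZMod (p ^ 2), 2 * x + α = 0 ↔ x = x₀ := by
    intro x
    constructor
    · intro h
      have h2 : (U : ZMod (p ^ 2)) * x = (U : ZMod (p ^ 2)) * x₀ := by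
        rw [hU, hx₀, hUU]
        linear_combination h
      exact (Units.mul_right_inj U).mp h2
    · rintro rfl
      rw [hx₀, hUU]
      ring
  have hset : {x : ZMod (p ^ 2) | 2 * x + α = 0} = {x₀} := by
    ext x; rw [Set.mem_setOf_eq, hsol, Set.mem_singleton_iff]
  have hx₀dvd : (p : ZMod (p ^ 2)) ∣ x₀ := by
    apply p_dvd_of_p_dvd_two_mul hp hodd
    have h0 : 2 * x₀ + α = 0 := (hsol x₀).mpr rfl
    have : 2 * x₀ = -α := by linear_combination h0
    rw [this]
    exact dvd_neg.mpr hdvd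
  have hdisj : Disjoint {x : ZMod (p ^ 2) | ¬ (p : ZMod (p ^ 2)) ∣ x} {x₀} := by
    rw [Set.disjoint_singleton_right]
    simp only [Set.mem_setOf_eq, not_not]
    exact hx₀dvd
  rw [hset, Set.ncard_union_eq hdisj (Set.toFinite _) (Set.toFinite _),
    card_not_dvd_set hp, Set.ncard_singleton]

lemma fiber_card_not_dvd (hp : p.Prime) (hodd : p ≠ 2) (α : ZMod (p ^ 2)) :
    ({x : ZMod (p ^ 2) | (p : ZMod (p ^ 2)) ∣ 2 * x + α}).ncard = p := by
  obtain ⟨U, hU⟩ := two_unit hp hodd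
  set f : ZMod (p ^ 2) → ZMod (p ^ 2) :=
    fun y => ((U⁻¹ : (ZMod (p ^ 2))ˣ) : ZMod (p ^ 2)) * (y - α) with hf
  have hUU : ∀ z : ZMod (p ^ 2), 2 * (((U⁻¹ : (ZMod (p ^ 2))ˣ) : ZMod (p ^ 2)) * z) = z := by
    intro z
    rw [← mul_assoc, ← hU, Units.mul_inv, one_mul]
  have hinj : Function.Injective f := by
    intro y y' h
    rw [hf] at h
    simp only at h
    have := congrArg (fun z => 2 * z) h
    simp only [hUU] at this
    linear_combination this
  have himg : {x : ZMod (p ^ 2) | (p : ZMod (p ^ 2)) ∣ 2 * x + α}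
      = f '' {y : ZMod (p ^ 2) | (p : ZMod (p ^ 2)) ∣ y} := by
    ext x
    simp only [Set.mem_setOf_eq, Set.mem_image]
    constructor
    · intro h
      refine ⟨2 * x + α, h, ?_⟩
      rw [hf]
      simp only
      have : 2 * x + α - α = 2 * x := by ring
      rw [this]
      have := hUU x
      -- U⁻¹ * (2 * x) = x
      have h2 : ((U⁻¹ : (ZMod (p ^ 2))ˣ) : ZMod (p ^ 2)) * (2 * x)
          = ((U⁻¹ : (ZMod (p ^ 2))ˣ) : ZMod (p ^ 2)) * ((U : ZMod (p ^ 2)) * x) := by rw [hU]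
      rw [h2, ← mul_assoc, Units.inv_mul, one_mul]
    · rintro ⟨y, hy, rfl⟩
      simp only [hf]
      rw [hUU]
      have hyy : y - α + α = y := by ring
      rw [hyy]
      exact hy
  rw [himg, Set.ncard_image_of_injective _ hinj, card_dvd_set hp]

end FiberCards

section CosetCount
variable {p : ℕ}

lemma cast_not_dvd (hp : p.Prime) {c : ℕ} (h1 : 1 ≤ c) (h2 : c < p) :
    ¬ (p : ZMod (p ^ 2)) ∣ (c : ZMod (p ^ 2)) := by
  haveI : NeZero p := ⟨hp.ne_zero⟩
  intro hd
  have h := (phi_eq_zero_iff hp _).mpr hd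
  rw [map_natCast, ZMod.natCast_eq_zero_iff] at h
  exact absurd (Nat.le_of_dvd h1 h) (by omega)

lemma cast_ne_zero'' (hp : p.Prime) {c : ℕ} (h1 : 1 ≤ c) (h2 : c < p) :
    ((c : ZMod (p ^ 2))) ≠ 0 := by
  intro h
  exact cast_not_dvd hp h1 h2 (by rw [h]; exact dvd_zero _)

lemma pmul_ne_zero (hp : p.Prime) {c : ℕ} (h1 : 1 ≤ c) (h2 : c < p) :
    (p : ZMod (p ^ 2)) * (c : ZMod (p ^ 2)) ≠ 0 := by
  haveI : NeZero p := ⟨hp.ne_zero⟩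
  intro h
  rw [mul_p_eq_zero_iff hp, map_natCast, ZMod.natCast_eq_zero_iff] at h
  exact absurd (Nat.le_of_dvd h1 h) (by omega)

lemma zmodp_eq_nat (hp : p.Prime) (m : ℕ) (hm : p = 2 * m + 1) {c c' : ℕ}
    (hc1 : 1 ≤ c) (hc2 : c ≤ m) (hc1' : 1 ≤ c') (hc2' : c' ≤ m)
    (h : (c' : ZMod p) = (c : ZMod p) ∨ (c' : ZMod p) = -(c : ZMod p)) : c' = c := by
  haveI : NeZero p := ⟨hp.ne_zero⟩
  rcases h with h | h
  · rw [ZMod.natCast_eq_natCast_iff] at h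
    have h2 : c' % p = c % p := h
    rw [Nat.mod_eq_of_lt (by omega), Nat.mod_eq_of_lt (by omega)] at h2
    exact h2
  · exfalso
    have h2 : ((c' + c : ℕ) : ZMod p) = 0 := by push_cast; rw [h]; ring
    rw [ZMod.natCast_eq_zero_iff] at h2
    exact absurd (Nat.le_of_dvd (by omega) h2) (by omega)

lemma rep_exists (hp : p.Prime) (m : ℕ) (hm : p = 2 * m + 1) (d : ZMod p) (hd : d ≠ 0) :
    ∃ c : ℕ, 1 ≤ c ∧ c ≤ m ∧ ((c : ZMod p) = d ∨ (c : ZMod p) = -d) := by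
  haveI : NeZero p := ⟨hp.ne_zero⟩
  have hv1 : d.val ≠ 0 := fun h => hd (by rwa [ZMod.val_eq_zero] at h)
  have hv2 : d.val < p := ZMod.val_lt d
  rcases le_or_gt d.val m with hle | hgt
  · exact ⟨d.val, by omega, hle, Or.inl (ZMod.natCast_rightInverse d)⟩
  · refine ⟨p - d.val, by omega, by omega, Or.inr ?_⟩
    have : ((p - d.val : ℕ) : ZMod p) = (p : ZMod p) - (d.val : ZMod p) := by
      push_cast [Nat.cast_sub (le_of_lt hv2)]
      ring
    rw [this, ZMod.natCast_self, ZMod.natCast_rightInverse d, zero_sub]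

lemma coset_units (hp : p.Prime) (hodd : p ≠ 2) (e : (ZMod (p ^ 2))ˣ)
    (he : (e : ZMod (p ^ 2)) = (p : ZMod (p ^ 2)) - 1) (x y : ZMod (p ^ 2))
    (hx : ¬ (p : ZMod (p ^ 2)) ∣ x) (hy : ¬ (p : ZMod (p ^ 2)) ∣ y)
    (hphi : phi p y = phi p x ∨ phi p y = - phi p x) :
    coset (Subgroup.zpowers e) y = coset (Subgroup.zpowers e) x := by
  haveI : Fact p.Prime := ⟨hp⟩
  obtain ⟨X, hX⟩ := (isUnit_iff_not_dvd hp x).mpr hx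
  obtain ⟨Y, hY⟩ := (isUnit_iff_not_dvd hp y).mpr hy
  have hY' : (Y : ZMod (p ^ 2)) = x + (y - x) := by rw [hY]; ring
  have hstep := unit_coset_step hp x (y - x) X Y hX hY'
  rw [show x + (y - x) = y from by ring] at hstep
  rw [coset_eq_iff]
  refine ⟨X⁻¹ * Y, ?_, hstep⟩
  rw [mem_zpowers_iff hp hodd e he]
  have hq := phi_quot hp x (y - x) X Y hX hY'
  rw [show x + (y - x) = y from by ring] at hq
  have hxne := phi_x_ne_zero_of_unit hp X
  rw [hX] at hxne
  rcases hphi with h | h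
  · left
    rw [h] at hq
    exact mul_right_cancel₀ hxne (by rw [one_mul]; exact hq)
  · right
    rw [h] at hq
    exact mul_right_cancel₀ hxne (by rw [neg_one_mul]; exact hq)

end CosetCount

section Main
variable {p : ℕ}

lemma card_cosets (hp : p.Prime) (hodd : p ≠ 2) (e : (ZMod (p ^ 2))ˣ)
    (he : (e : ZMod (p ^ 2)) = (p : ZMod (p ^ 2)) - 1) :
    {S : Set (ZMod (p ^ 2)) | ∃ x : ZMod (p ^ 2), S = coset (Subgroup.zpowers e) x}.ncard = p := by
  haveI : Fact p.Prime := ⟨hp⟩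
  haveI : NeZero p := ⟨hp.ne_zero⟩
  obtain ⟨m, hm⟩ := hp.odd_of_ne_two hodd
  have hm1 : 1 ≤ m := by have := hp.two_le; omega
  set G := Subgroup.zpowers e with hG
  set r : Fin p → ZMod (p ^ 2) := fun i =>
    if i.val = 0 then 0
    else if i.val ≤ m then ((i.val : ℕ) : ZMod (p ^ 2))
    else (p : ZMod (p ^ 2)) * (((i.val - m : ℕ)) : ZMod (p ^ 2)) with hr
  -- evaluation lemmas
  have hr0 : ∀ i : Fin p, i.val = 0 → r i = 0 := by
    intro i h; simp only [hr]; rw [if_pos h]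
  have hrmid : ∀ i : Fin p, i.val ≠ 0 → i.val ≤ m → r i = ((i.val : ℕ) : ZMod (p ^ 2)) := by
    intro i h h'; simp only [hr]; rw [if_neg h, if_pos h']
  have hrhigh : ∀ i : Fin p, m < i.val →
      r i = (p : ZMod (p ^ 2)) * (((i.val - m : ℕ)) : ZMod (p ^ 2)) := by
    intro i h; simp only [hr]; rw [if_neg (by omega), if_neg (by omega)]
  have hibd : ∀ i : Fin p, i.val < 2 * m + 1 := by intro i; rw [← hm]; exact i.isLt
  -- nonzero and divisibility classification
  have hz : ∀ i : Fin p, i.val ≠ 0 → r i ≠ 0 := by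
    intro i h
    rcases le_or_gt i.val m with h' | h'
    · rw [hrmid i h h']
      exact cast_ne_zero'' hp (by omega) (by omega)
    · rw [hrhigh i h']
      exact pmul_ne_zero hp (by omega) (by have := hibd i; omega)
  have hdv : ∀ i : Fin p, i.val ≠ 0 → i.val ≤ m → ¬ (p : ZMod (p ^ 2)) ∣ r i := by
    intro i h h'
    rw [hrmid i h h']
    exact cast_not_dvd hp (by omega) (by omega)
  have hdv2 : ∀ i : Fin p, m < i.val → (p : ZMod (p ^ 2)) ∣ r i := by
    intro i h
    rw [hrhigh i h]
    exact Dvd.intro _ rfl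
  -- surjectivity
  have hsurj : ∀ x : ZMod (p ^ 2), ∃ i : Fin p, coset G x = coset G (r i) := by
    intro x
    by_cases hx0 : x = 0
    · refine ⟨⟨0, hp.pos⟩, ?_⟩
      rw [hr0 ⟨0, hp.pos⟩ rfl, hx0]
    by_cases hxd : (p : ZMod (p ^ 2)) ∣ x
    · obtain ⟨t, ht⟩ := hxd
      have hphit : phi p t ≠ 0 := by
        intro h
        exact hx0 (by rw [ht]; exact (mul_p_eq_zero_iff hp t).mpr h)
      obtain ⟨c, hc1, hc2, hc3⟩ := rep_exists hp m hm (phi p t) hphit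
      refine ⟨⟨m + c, by omega⟩, ?_⟩
      have hrv : r ⟨m + c, by omega⟩ = (p : ZMod (p ^ 2)) * ((c : ℕ) : ZMod (p ^ 2)) := by
        rw [hrhigh ⟨m + c, by omega⟩ (by simp; omega)]
        congr 2
        simp
      rw [hrv, ht]
      rcases hc3 with h | h
      · have heq : (p : ZMod (p ^ 2)) * ((c : ℕ) : ZMod (p ^ 2)) = (p : ZMod (p ^ 2)) * t := by
          rw [mul_p_eq_iff hp, map_natCast]
          exact h
        rw [heq]
      · have heq : (p : ZMod (p ^ 2)) * ((c : ℕ) : ZMod (p ^ 2)) = -((p : ZMod (p ^ 2)) * t) := by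
          rw [show -((p : ZMod (p ^ 2)) * t) = (p : ZMod (p ^ 2)) * (-t) from by ring,
            mul_p_eq_iff hp, map_natCast, map_neg]
          exact h
        rw [heq]
        have hneg : -((p : ZMod (p ^ 2)) * t)
            = ((p : ZMod (p ^ 2)) * t) * ((-1 : (ZMod (p ^ 2))ˣ) : ZMod (p ^ 2)) := by
          rw [Units.val_neg, Units.val_one]; ring
        rw [hneg, hG]
        exact (coset_mul_mem _ _ _ (neg_one_mem hp hodd e he)).symm
    · have hphix : phi p x ≠ 0 := fun h => hxd ((phi_eq_zero_iff hp x).mp h)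
      obtain ⟨c, hc1, hc2, hc3⟩ := rep_exists hp m hm (phi p x) hphix
      refine ⟨⟨c, by omega⟩, ?_⟩
      have hrv : r ⟨c, by omega⟩ = ((c : ℕ) : ZMod (p ^ 2)) := by
        rw [hrmid ⟨c, by omega⟩ (by simp; omega) (by simp; omega)]
      rw [hrv, hG]
      apply coset_units hp hodd e he _ _ (cast_not_dvd hp (by omega) (by omega)) hxd
      have hphic : phi p ((c : ℕ) : ZMod (p ^ 2)) = (c : ZMod p) := map_natCast _ _
      rcases hc3 with h | h
      · left; rw [hphic, h]
      · right; rw [hphic, h]; ring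
  -- injectivity
  have hinj : Function.Injective (fun i : Fin p => coset G (r i)) := by
    intro i j hij
    simp only at hij
    obtain ⟨g, hg, hije⟩ := (coset_eq_iff G (r j) (r i)).mp hij
    obtain ⟨g', hg', hjie⟩ := (coset_eq_iff G (r i) (r j)).mp hij.symm
    by_cases hi0 : i.val = 0
    · by_cases hj0 : j.val = 0
      · exact Fin.ext (by rw [hi0, hj0])
      · exfalso
        apply hz j hj0
        rw [hr0 i hi0] at hjie
        rw [hjie, zero_mul]
    by_cases hj0 : j.val = 0
    · exfalso
      apply hz i hi0
      rw [hr0 j hj0] at hije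
      rw [hije, zero_mul]
    rcases le_or_gt i.val m with him | him <;> rcases le_or_gt j.val m with hjm | hjm
    · -- both mid
      rw [hrmid i hi0 him, hrmid j hj0 hjm] at hije
      have hphig := (mem_zpowers_iff hp hodd e he g).mp hg
      have hphi : ((i.val : ℕ) : ZMod p) = ((j.val : ℕ) : ZMod p) * phi p (g : ZMod (p ^ 2)) := by
        have := congrArg (phi p) hije
        rwa [map_mul, map_natCast, map_natCast] at this
      have : i.val = j.val := by
        apply zmodp_eq_nat hp m hm (by omega) hjm (by omega) him
        rcases hphig with h | h
        · left; rw [hphi, h, mul_one]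
        · right; rw [hphi, h]; ring
      exact Fin.ext this
    · -- i mid, j high : contradiction
      exfalso
      apply hdv i hi0 him
      rcases mul_g_of_p_dvd hp hodd e he (r j) (hdv2 j hjm) g hg with h | h
      · rw [hije, h]; exact hdv2 j hjm
      · rw [hije, h]; exact dvd_neg.mpr (hdv2 j hjm)
    · -- i high, j mid : contradiction
      exfalso
      apply hdv j hj0 hjm
      rcases mul_g_of_p_dvd hp hodd e he (r i) (hdv2 i him) g' hg' with h | h
      · rw [hjie, h]; exact hdv2 i him
      · rw [hjie, h]; exact dvd_neg.mpr (hdv2 i him)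
    · -- both high
      rcases mul_g_of_p_dvd hp hodd e he (r j) (hdv2 j hjm) g hg with h | h
      all_goals rw [h] at hije
      · rw [hrhigh i him, hrhigh j hjm, mul_p_eq_iff hp, map_natCast, map_natCast] at hije
        have := zmodp_eq_nat hp m hm (c := j.val - m) (c' := i.val - m)
          (by omega) (by have := hibd j; omega) (by omega) (by have := hibd i; omega)
          (Or.inl hije)
        exact Fin.ext (by omega)
      · rw [hrhigh i him, hrhigh j hjm] at hije
        rw [show -((p : ZMod (p ^ 2)) * (((j.val - m : ℕ)) : ZMod (p ^ 2)))
            = (p : ZMod (p ^ 2)) * (-(((j.val - m : ℕ)) : ZMod (p ^ 2))) from by ring,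
          mul_p_eq_iff hp, map_natCast, map_neg, map_natCast] at hije
        have := zmodp_eq_nat hp m hm (c := j.val - m) (c' := i.val - m)
          (by omega) (by have := hibd j; omega) (by omega) (by have := hibd i; omega)
          (Or.inr hije)
        exact Fin.ext (by omega)
  -- conclusion
  have hset : {S : Set (ZMod (p ^ 2)) | ∃ x : ZMod (p ^ 2), S = coset G x}
      = Set.range (fun i : Fin p => coset G (r i)) := by
    ext S
    simp only [Set.mem_setOf_eq, Set.mem_range]
    constructor
    · rintro ⟨x, rfl⟩
      obtain ⟨i, hi⟩ := hsurj x
      exact ⟨i, hi.symm⟩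
    · rintro ⟨i, rfl⟩
      exact ⟨r i, rfl⟩
  rw [hset, ← Set.image_univ, Set.ncard_image_of_injective _ hinj, Set.ncard_univ,
    Nat.card_eq_fintype_card, Fintype.card_fin]

end Main

theorem stmt_6 (p : ℕ) (hp : p.Prime) (hodd : p ≠ 2) (e : (ZMod (p ^ 2))ˣ)
    (he : (e : ZMod (p ^ 2)) = (p : ZMod (p ^ 2)) - 1) :
    {S : Set (ZMod (p ^ 2)) | ∃ x : ZMod (p ^ 2), S = coset (Subgroup.zpowers e) x}.ncard = p ∧
      ∀ α : ZMod (p ^ 2), α ≠ 0 →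
        ((p : ZMod (p ^ 2)) ∣ α →
          {x : ZMod (p ^ 2) |
            coset (Subgroup.zpowers e) (x + α) = coset (Subgroup.zpowers e) x}.ncard
            = p ^ 2 - p + 1) ∧
        (¬ (p : ZMod (p ^ 2)) ∣ α →
          {x : ZMod (p ^ 2) |
            coset (Subgroup.zpowers e) (x + α) = coset (Subgroup.zpowers e) x}.ncard = p) := by
  refine ⟨card_cosets hp hodd e he, ?_⟩
  intro α hα
  constructor
  · intro hdvd
    rw [fiber_case_dvd hp hodd e he α hα hdvd]
    exact fiber_card_dvd hp hodd α hdvd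
  · intro hndvd
    rw [fiber_case_not_dvd hp hodd e he α hndvd]
    exact fiber_card_not_dvd hp hodd α
end

section
/- Let s ≥ 1 be an integer, p a prime, and k ≥ 2s an integer; let n = p^k and let G be the cyclic subgroup of (Z_n)^× generated by the unit e = p^{k−s} + 1. Then for every α ∈ Z_n, writing p^i ∥ α to mean that p^i divides α but p^{i+1} does not, the cardinality of the coset αG = {α·g : g ∈ G} equals 1 if α = 0, equals 1 if p^i ∥ α for some i with s ≤ i ≤ k−1, and equals p^{s−i} if p^i ∥ α for some i with 0 ≤ i ≤ s−1. -/
theorem stmt_15 (s : ℕ) (hs : 1 ≤ s) (p : ℕ) (hp : p.Prime) (k : ℕ) (hk : 2 * s ≤ k)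
    (e : (ZMod (p ^ k))ˣ)
    (he : (e : ZMod (p ^ k)) = (p : ZMod (p ^ k)) ^ (k - s) + 1) :
    ∀ α : ZMod (p ^ k),
      (α = 0 → (coset (Subgroup.zpowers e) α).ncard = 1) ∧
      (∀ i : ℕ, s ≤ i → i ≤ k - 1 →
        (p : ZMod (p ^ k)) ^ i ∣ α → ¬ (p : ZMod (p ^ k)) ^ (i + 1) ∣ α →
        (coset (Subgroup.zpowers e) α).ncard = 1) ∧
      (∀ i : ℕ, i ≤ s - 1 →
        (p : ZMod (p ^ k)) ^ i ∣ α → ¬ (p : ZMod (p ^ k)) ^ (i + 1) ∣ α →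
        (coset (Subgroup.zpowers e) α).ncard = p ^ (s - i)) := by
  have hsk : s ≤ k := by omega
  have hk0 : k ≠ 0 := by omega
  have hp1 : 1 < p := hp.one_lt
  have hpk0 : p ^ k ≠ 0 := pow_ne_zero _ hp.pos.ne'
  haveI : NeZero (p ^ k) := ⟨hpk0⟩
  intro α
  set t : ZMod (p ^ k) := (p : ZMod (p ^ k)) ^ (k - s) with ht
  have hcastpow : ∀ m : ℕ, ((p ^ m : ℕ) : ZMod (p ^ k)) = (p : ZMod (p ^ k)) ^ m := by
    intro m; push_cast; ring
  have hpk : (p : ZMod (p ^ k)) ^ k = 0 := by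
    rw [← hcastpow, ZMod.natCast_self]
  have hpow_zero : ∀ m : ℕ, k ≤ m → (p : ZMod (p ^ k)) ^ m = 0 := by
    intro m hm
    obtain ⟨d, rfl⟩ := Nat.exists_eq_add_of_le hm
    rw [pow_add, hpk, zero_mul]
  have htt : t * t = 0 := by
    rw [ht, ← pow_add]
    exact hpow_zero _ (by omega)
  have hpst : (p : ZMod (p ^ k)) ^ s * t = 0 := by
    rw [ht, ← pow_add]
    exact hpow_zero _ (by omega)
  -- powers of e
  have hpow : ∀ m : ℕ, ((e ^ m : (ZMod (p ^ k))ˣ) : ZMod (p ^ k)) = 1 + (m : ZMod (p ^ k)) * t := by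
    intro m
    induction m with
    | zero => simp
    | succ n ih =>
      rw [pow_succ, Units.val_mul, ih, he]
      push_cast
      linear_combination ((n : ZMod (p ^ k))) * htt
  have hes : e ^ (p ^ s) = 1 := by
    ext
    rw [hpow, hcastpow, hpst, add_zero, Units.val_one]
  set c : ZMod (p ^ k) := α * t with hc
  have hpsc : (p ^ s : ℕ) • c = 0 := by
    have h0 : (p : ZMod (p ^ k)) ^ s * c = 0 := by
      rw [hc, ht, show (p : ZMod (p ^ k)) ^ s * (α * (p : ZMod (p ^ k)) ^ (k - s))
        = (p : ZMod (p ^ k)) ^ (s + (k - s)) * α by rw [pow_add]; ring,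
        hpow_zero _ (by omega), zero_mul]
    rw [nsmul_eq_mul, hcastpow]; exact h0
  have hpscz : ((p : ℤ) ^ s) • c = 0 := by
    rw [show ((p : ℤ) ^ s) = ((p ^ s : ℕ) : ℤ) by push_cast; ring, natCast_zsmul, hpsc]
  -- reduce zsmul to nsmul with bound
  have hzsmul : ∀ z : ℤ, z • c = (z % (p ^ s : ℤ)).toNat • c := by
    intro z
    have hz : z = (p ^ s : ℤ) * (z / (p ^ s : ℤ)) + z % (p ^ s : ℤ) :=
      (Int.mul_ediv_add_emod z _).symm
    have hr : (0 : ℤ) ≤ z % (p ^ s : ℤ) :=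
      Int.emod_nonneg z (by positivity)
    calc z • c = ((p ^ s : ℤ) * (z / (p ^ s : ℤ)) + z % (p ^ s : ℤ)) • c := by rw [← hz]
      _ = (z / (p ^ s : ℤ)) • ((p ^ s : ℤ) • c) + (z % (p ^ s : ℤ)) • c := by
          rw [add_zsmul, mul_zsmul']
      _ = (z % (p ^ s : ℤ)) • c := by rw [hpscz, smul_zero, zero_add]
      _ = (z % (p ^ s : ℤ)).toNat • c := by
          rw [← natCast_zsmul, Int.toNat_of_nonneg hr]
  -- the coset as a translate of zmultiples
  have hcoset : coset (Subgroup.zpowers e) α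
      = (fun x => α + x) '' (AddSubgroup.zmultiples c : Set (ZMod (p ^ k))) := by
    ext y
    constructor
    · rintro ⟨g, hg, rfl⟩
      obtain ⟨m, rfl⟩ := Subgroup.mem_zpowers_iff.mp hg
      refine ⟨((m % (p ^ s : ℤ)).toNat : ℤ) • c, AddSubgroup.mem_zmultiples_iff.mpr ⟨_, rfl⟩, ?_⟩
      have hm : e ^ m = e ^ ((m % (p ^ s : ℤ)).toNat) := by
        have hz : m = (p ^ s : ℤ) * (m / (p ^ s : ℤ)) + m % (p ^ s : ℤ) :=
          (Int.mul_ediv_add_emod m _).symm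
        have hr : (0 : ℤ) ≤ m % (p ^ s : ℤ) :=
          Int.emod_nonneg m (by positivity)
        calc e ^ m = e ^ ((p ^ s : ℤ) * (m / (p ^ s : ℤ)) + m % (p ^ s : ℤ)) := by rw [← hz]
          _ = (e ^ (p ^ s : ℤ)) ^ (m / (p ^ s : ℤ)) * e ^ (m % (p ^ s : ℤ)) := by
              rw [zpow_add, zpow_mul]
          _ = e ^ (m % (p ^ s : ℤ)) := by
              rw [show (e ^ (p ^ s : ℤ)) = 1 by rw [← zpow_natCast] at hes; exact_mod_cast hes,
                one_zpow, one_mul]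
          _ = e ^ ((m % (p ^ s : ℤ)).toNat) := by
              rw [← zpow_natCast, Int.toNat_of_nonneg hr]
      rw [hm, hpow]
      rw [natCast_zsmul, nsmul_eq_mul, hc]
      ring
    · rintro ⟨x, hx, rfl⟩
      obtain ⟨z, rfl⟩ := AddSubgroup.mem_zmultiples_iff.mp hx
      refine ⟨e ^ ((z % (p ^ s : ℤ)).toNat), Subgroup.pow_mem _ (Subgroup.mem_zpowers e) _, ?_⟩
      rw [hpow, hzsmul z, nsmul_eq_mul, hc]
      ring
  -- cardinality of the coset is the additive order of c
  have hcard : (coset (Subgroup.zpowers e) α).ncard = addOrderOf c := by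
    rw [hcoset, Set.ncard_image_of_injective _ (add_right_injective α),
      ← Nat.card_coe_set_eq]
    exact Nat.card_zmultiples c
  -- divisibility transfer
  have hdvd : ∀ i : ℕ, i ≤ k → (((p : ZMod (p ^ k)) ^ i ∣ α) ↔ p ^ i ∣ α.val) := by
    intro i hik
    constructor
    · rintro ⟨γ, hγ⟩
      have h1 : α = ((p ^ i * γ.val : ℕ) : ZMod (p ^ k)) := by
        rw [hγ]; push_cast [ZMod.natCast_val, ZMod.cast_id]; ring
      have h2 : α.val = (p ^ i * γ.val) % p ^ k := by
        rw [h1, ZMod.val_natCast]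
      rw [h2]
      exact (Nat.dvd_mod_iff (pow_dvd_pow p hik)).mpr ⟨γ.val, rfl⟩
    · rintro ⟨m, hm⟩
      refine ⟨(m : ZMod (p ^ k)), ?_⟩
      have : α = ((α.val : ℕ) : ZMod (p ^ k)) := by
        rw [ZMod.natCast_val, ZMod.cast_id]
      rw [this, hm]
      push_cast
      ring
  refine ⟨?_, ?_, ?_⟩
  · intro hα
    rw [hcard, hc, hα, zero_mul, addOrderOf_zero]
  · intro i hsi _ hdi _
    have hps : (p : ZMod (p ^ k)) ^ s ∣ α := dvd_trans (pow_dvd_pow _ hsi) hdi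
    obtain ⟨β, hβ⟩ := hps
    have : c = 0 := by
      rw [hc, hβ, mul_assoc, mul_comm β, ← mul_assoc, hpst, zero_mul]
    rw [hcard, this, addOrderOf_zero]
  · intro i his hdi hndi
    have hi : i < s := by omega
    have h1 : p ^ i ∣ α.val := (hdvd i (by omega)).mp hdi
    have h2 : ¬ p ^ (i + 1) ∣ α.val := fun h => hndi ((hdvd (i + 1) (by omega)).mpr h)
    -- c as a natural number cast
    have hcval : c = ((p ^ (k - s) * α.val : ℕ) : ZMod (p ^ k)) := by
      rw [hc, ht]
      push_cast [ZMod.natCast_val, ZMod.cast_id]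
      ring
    rw [hcard, hcval, ZMod.addOrderOf_coe _ hpk0]
    -- compute the gcd
    have hgcd : (p ^ k).gcd (p ^ (k - s) * α.val) = p ^ (k - s + i) := by
      have hd1 : p ^ (k - s + i) ∣ p ^ k := pow_dvd_pow p (by omega)
      have hd2 : p ^ (k - s + i) ∣ p ^ (k - s) * α.val := by
        rw [pow_add]; exact mul_dvd_mul_left _ h1
      obtain ⟨j, hjk, hj⟩ := (Nat.dvd_prime_pow hp).mp (Nat.gcd_dvd_left (p ^ k) (p ^ (k - s) * α.val))
      have hjle : j ≤ k - s + i := by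
        by_contra hlt
        have hx : p ^ (k - s + i + 1) ∣ p ^ j := pow_dvd_pow p (by omega)
        have : p ^ (k - s + i + 1) ∣ p ^ (k - s) * α.val :=
          hx.trans (by rw [← hj]; exact Nat.gcd_dvd_right _ _)
        rw [show k - s + i + 1 = (k - s) + (i + 1) by ring, pow_add] at this
        exact h2 ((mul_dvd_mul_iff_left (a := p ^ (k - s)) (pow_ne_zero _ hp.pos.ne')).mp this)
      have hge : p ^ (k - s + i) ∣ p ^ j := by
        rw [← hj]; exact Nat.dvd_gcd hd1 hd2
      have : k - s + i ≤ j := (Nat.pow_dvd_pow_iff_le_right hp1).mp hge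
      rw [hj]; congr 1; omega
    rw [hgcd, Nat.pow_div (by omega) hp.pos]
    congr 1
    omega
end

section
/- Let p be a prime and k ≥ 2 an integer; let n = p^k and let G be the cyclic subgroup of (Z_n)^× generated by the unit e = p^{k−1} + 1. For x ∈ Z_n let xG = {x·g : g ∈ G}. Then (i) the number of distinct cosets {xG : x ∈ Z_n} equals 2p^{k−1} − p^{k−2}, and (ii) for every nonzero α ∈ Z_n, the cardinality of {x ∈ Z_n : (x+α)G = xG} lies in {0, p^k − p^{k−1}}; in particular the coset index function is a (p^k, 2p^{k−1}−p^{k−2}, {0, p^k−p^{k−1}}) zero-difference function. -/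
/-!
Write `q = p^(k-1)`, so that `e = 1 + q` and `q² = 0` in `Z_n` (as `2(k-1) ≥ k`). Hence
`e^m = 1 + mq`, `G = {1 + tq}` and `xG = {x + xqt}`. If `p ∣ x` then `xq = 0` and `xG = {x}`;
if `x` is a unit then `xG = x + qZ_n` is a full fibre of the reduction `Z_{p^k} → Z_{p^(k-1)}`.
So there are `p^(k-1)` singleton cosets and `φ(p^(k-1))` fibres over units. Finally, for
`α ≠ 0`, `(x+α)G = xG` forces `x` to be a unit and `α ∈ qZ_n`; conversely if `α ∈ qZ_n` it
holds for every unit `x`, so the solution set is empty or has `φ(p^k) = p^k - p^(k-1)` elements.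
-/

open Subgroup

theorem Units.val_zpow_of_mul_self_eq_zero {R : Type*} [CommRing R] {q : R} (hq : q * q = 0)
    {e : Rˣ} (he : (e : R) = 1 + q) (m : ℤ) : ((e ^ m : Rˣ) : R) = 1 + m * q := by
  induction m using Int.induction_on with
  | zero => simp
  | succ i ih =>
    rw [zpow_add_one, Units.val_mul, ih, he]
    push_cast
    linear_combination (i : R) * hq
  | pred i ih =>
    have h : ((e ^ (-(i : ℤ) - 1) : Rˣ) : R) * (1 + q) = ((e ^ (-(i : ℤ)) : Rˣ) : R) := by
      rw [← he, ← Units.val_mul, ← zpow_add_one, sub_add_cancel]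
    rw [ih] at h
    push_cast at h ⊢
    linear_combination (1 - q) * h + (((e ^ (-(i : ℤ) - 1) : Rˣ) : R) + i) * hq

theorem mem_coset_self {R : Type*} [Monoid R] (G : Subgroup Rˣ) (x : R) : x ∈ coset G x :=
  ⟨1, G.one_mem, (mul_one x).symm⟩

theorem isUnit_iff_of_coset_eq {R : Type*} [Monoid R] {G : Subgroup Rˣ} {x y : R}
    (h : coset G x = coset G y) : IsUnit x ↔ IsUnit y := by
  obtain ⟨g, -, hy⟩ : y ∈ coset G x := h ▸ mem_coset_self G y
  rw [hy, Units.isUnit_mul_units]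

theorem ZMod.castHom_eq_castHom_iff {m n : ℕ} (h : m ∣ n) (x y : ZMod n) :
    castHom h (ZMod m) y = castHom h (ZMod m) x ↔ ∃ t : ZMod n, y = x + m * t := by
  constructor
  · intro hxy
    have hz : (((y - x).cast : ℤ) : ZMod m) = 0 := by
      rw [← map_intCast (castHom h (ZMod m)), intCast_zmod_cast, map_sub, hxy, sub_self]
    obtain ⟨c, hc⟩ := (intCast_zmod_eq_zero_iff_dvd _ _).1 hz
    have hc' := congrArg (Int.cast : ℤ → ZMod n) hc
    rw [intCast_zmod_cast] at hc'
    push_cast at hc'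
    exact ⟨c, by linear_combination hc'⟩
  · rintro ⟨t, rfl⟩
    rw [map_add, map_mul, map_natCast, natCast_self, zero_mul, add_zero]

theorem ncard_setOf_isUnit (n : ℕ) [NeZero n] : {x : ZMod n | IsUnit x}.ncard = n.totient := by
  rw [show {x : ZMod n | IsUnit x} = Set.range ((↑) : (ZMod n)ˣ → ZMod n) from rfl,
    Set.ncard_range_of_injective Units.val_injective, Nat.card_eq_fintype_card,
    ZMod.card_units_eq_totient]

theorem Nat.totient_prime_pow_eq_sub {p n : ℕ} (hp : p.Prime) (hn : 0 < n) :
    (p ^ n).totient = p ^ n - p ^ (n - 1) := by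
  rw [totient_prime_pow hp hn, Nat.mul_sub_one, ← pow_succ, Nat.sub_add_cancel hn]

section SquareZero

variable {n : ℕ} {q : ZMod n} {e : (ZMod n)ˣ}

theorem coset_zpowers_eq_range (hq : q * q = 0) (he : (e : ZMod n) = 1 + q) (x : ZMod n) :
    coset (zpowers e) x = Set.range fun t => x + x * q * t := by
  ext y
  simp only [coset, mem_zpowers_iff, Set.mem_ofPred_eq, Set.mem_range]
  constructor
  · rintro ⟨_, ⟨m, rfl⟩, rfl⟩
    exact ⟨m, by rw [Units.val_zpow_of_mul_self_eq_zero hq he]; ring⟩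
  · rintro ⟨t, rfl⟩
    refine ⟨e ^ (t.cast : ℤ), ⟨_, rfl⟩, ?_⟩
    rw [Units.val_zpow_of_mul_self_eq_zero hq he, ZMod.intCast_zmod_cast]
    ring

theorem coset_zpowers_eq_singleton (hq : q * q = 0) (he : (e : ZMod n) = 1 + q) {x : ZMod n}
    (hx : x * q = 0) : coset (zpowers e) x = {x} := by
  simp [coset_zpowers_eq_range hq he, hx]

theorem coset_zpowers_eq_range_of_isUnit (hq : q * q = 0) (he : (e : ZMod n) = 1 + q)
    {x : ZMod n} (hx : IsUnit x) : coset (zpowers e) x = Set.range fun t => x + q * t := by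
  rw [coset_zpowers_eq_range hq he]
  ext y
  constructor
  · rintro ⟨t, rfl⟩
    exact ⟨x * t, by ring⟩
  · rintro ⟨t, rfl⟩
    exact ⟨hx.unit⁻¹ * t, by linear_combination q * t * hx.mul_val_inv⟩

end SquareZero

section PrimePower

variable {p k : ℕ}

def reduceMod (p k : ℕ) : ZMod (p ^ k) →+* ZMod (p ^ (k - 1)) :=
  ZMod.castHom (pow_dvd_pow p (Nat.sub_le k 1)) _

theorem reduceMod_surjective : Function.Surjective (reduceMod p k) :=
  ZMod.castHom_surjective _

theorem natCast_pow_pred_mul_self (hk : 2 ≤ k) :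
    ((p ^ (k - 1) : ℕ) : ZMod (p ^ k)) * (p ^ (k - 1) : ℕ) = 0 := by
  rw [← Nat.cast_mul, ZMod.natCast_eq_zero_iff, ← pow_add]
  exact pow_dvd_pow p (by omega)

theorem isUnit_or_mul_natCast_pow_pred_eq_zero (hp : p.Prime) (hk : 0 < k) (x : ZMod (p ^ k)) :
    IsUnit x ∨ x * (p ^ (k - 1) : ℕ) = 0 := by
  have := Fact.mk hp
  rw [← ZMod.natCast_zmod_val x, ZMod.isUnit_iff_coprime, Nat.coprime_pow_right_iff hk,
    Nat.coprime_comm, hp.coprime_iff_not_dvd, ← Nat.cast_mul, ZMod.natCast_eq_zero_iff,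
    or_iff_not_imp_left, not_not]
  intro h
  calc p ^ k = p * p ^ (k - 1) := by rw [← pow_succ']; congr 1; omega
    _ ∣ x.val * p ^ (k - 1) := mul_dvd_mul_right h _

theorem isUnit_of_isUnit_reduceMod [NeZero p] (hk : 2 ≤ k) {x : ZMod (p ^ k)}
    (hx : IsUnit (reduceMod p k x)) : IsUnit x := by
  rw [reduceMod, ZMod.castHom_apply, ← ZMod.natCast_val, ZMod.isUnit_iff_coprime,
    Nat.coprime_pow_right_iff (by omega)] at hx
  rwa [← ZMod.natCast_zmod_val x, ZMod.isUnit_iff_coprime, Nat.coprime_pow_right_iff (by omega)]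

theorem ncard_compl_setOf_isUnit (hp : p.Prime) (hk : 0 < k) :
    {x : ZMod (p ^ k) | IsUnit x}ᶜ.ncard = p ^ (k - 1) := by
  have := Fact.mk hp
  rw [Set.ncard_compl, Nat.card_zmod, ncard_setOf_isUnit, Nat.totient_prime_pow_eq_sub hp hk,
    Nat.sub_sub_self (Nat.pow_le_pow_right hp.pos (Nat.sub_le k 1))]

variable {e : (ZMod (p ^ k))ˣ}

theorem coset_eq_preimage_reduceMod (hk : 2 ≤ k)
    (he : (e : ZMod (p ^ k)) = 1 + (p ^ (k - 1) : ℕ)) {x : ZMod (p ^ k)} (hx : IsUnit x) :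
    coset (zpowers e) x = reduceMod p k ⁻¹' {reduceMod p k x} := by
  ext y
  rw [coset_zpowers_eq_range_of_isUnit (natCast_pow_pred_mul_self hk) he hx]
  simp only [Set.mem_range, Set.mem_preimage, Set.mem_singleton_iff, reduceMod,
    ZMod.castHom_eq_castHom_iff]
  exact exists_congr fun _ => eq_comm

theorem coset_add_eq_coset_iff (hp : p.Prime) (hk : 2 ≤ k)
    (he : (e : ZMod (p ^ k)) = 1 + (p ^ (k - 1) : ℕ)) {α : ZMod (p ^ k)} (hα : α ≠ 0)
    (x : ZMod (p ^ k)) :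
    coset (zpowers e) (x + α) = coset (zpowers e) x ↔ IsUnit x ∧ reduceMod p k α = 0 := by
  have := Fact.mk hp
  constructor
  · intro h
    have hmem := h ▸ mem_coset_self (zpowers e) (x + α)
    have hx : IsUnit x := by
      refine (isUnit_or_mul_natCast_pow_pred_eq_zero hp (by omega) x).resolve_right
        fun hx => hα ?_
      rw [coset_zpowers_eq_singleton (natCast_pow_pred_mul_self hk) he hx] at hmem
      simpa using hmem
    rw [coset_eq_preimage_reduceMod hk he hx] at hmem
    simpa [hx] using hmem
  · rintro ⟨hx, hα0⟩
    have hxα : reduceMod p k (x + α) = reduceMod p k x := by rw [map_add, hα0, add_zero]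
    have hxα' : IsUnit (x + α) := isUnit_of_isUnit_reduceMod hk (hxα ▸ hx.map _)
    rw [coset_eq_preimage_reduceMod hk he hx, coset_eq_preimage_reduceMod hk he hxα', hxα]

theorem ncard_range_coset (hp : p.Prime) (hk : 2 ≤ k)
    (he : (e : ZMod (p ^ k)) = 1 + (p ^ (k - 1) : ℕ)) :
    (Set.range (coset (zpowers e))).ncard = 2 * p ^ (k - 1) - p ^ (k - 2) := by
  have := Fact.mk hp
  set U := {x : ZMod (p ^ k) | IsUnit x}
  have h_units :
      coset (zpowers e) '' U = (fun u => reduceMod p k ⁻¹' {u}) '' {u | IsUnit u} := by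
    ext s
    constructor
    · rintro ⟨x, hx, rfl⟩
      exact ⟨_, hx.map _, (coset_eq_preimage_reduceMod hk he hx).symm⟩
    · rintro ⟨u, hu, rfl⟩
      obtain ⟨x, rfl⟩ := reduceMod_surjective u
      have hx := isUnit_of_isUnit_reduceMod hk hu
      exact ⟨x, hx, coset_eq_preimage_reduceMod hk he hx⟩
  have h_nonunits : coset (zpowers e) '' Uᶜ = (fun x => {x}) '' Uᶜ :=
    Set.image_congr fun x hx => coset_zpowers_eq_singleton (natCast_pow_pred_mul_self hk) he
      ((isUnit_or_mul_natCast_pow_pred_eq_zero hp (by omega) x).resolve_left hx)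
  have h_disj : Disjoint (coset (zpowers e) '' U) (coset (zpowers e) '' Uᶜ) := by
    rw [Set.disjoint_left]
    rintro _ ⟨x, hx, rfl⟩ ⟨y, hy, hyx⟩
    exact hy ((isUnit_iff_of_coset_eq hyx).2 hx)
  have h_fibre_inj : Function.Injective fun u => reduceMod p k ⁻¹' {u} :=
    (Set.preimage_injective.2 reduceMod_surjective).comp Set.singleton_injective
  rw [← Set.image_univ, ← Set.union_compl_self U, Set.image_union, Set.ncard_union_eq h_disj,
    h_units, h_nonunits, Set.ncard_image_of_injective _ h_fibre_inj,
    Set.ncard_image_of_injective _ Set.singleton_injective, ncard_setOf_isUnit,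
    ncard_compl_setOf_isUnit hp (by omega), Nat.totient_prime_pow_eq_sub hp (by omega),
    show k - 1 - 1 = k - 2 by omega]
  have := Nat.pow_le_pow_right hp.pos (show k - 2 ≤ k - 1 by omega)
  omega

theorem ncard_setOf_coset_add_eq_coset (hp : p.Prime) (hk : 2 ≤ k)
    (he : (e : ZMod (p ^ k)) = 1 + (p ^ (k - 1) : ℕ)) {α : ZMod (p ^ k)} (hα : α ≠ 0) :
    {x | coset (zpowers e) (x + α) = coset (zpowers e) x}.ncard ∈
      ({0, p ^ k - p ^ (k - 1)} : Set ℕ) := by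
  have := Fact.mk hp
  simp_rw [coset_add_eq_coset_iff hp hk he hα]
  by_cases hα0 : reduceMod p k α = 0
  · simp only [hα0, and_true]
    rw [ncard_setOf_isUnit, Nat.totient_prime_pow_eq_sub hp (by omega)]
    exact Or.inr rfl
  · simp [hα0]

end PrimePower

theorem stmt_16 (p : ℕ) (hp : p.Prime) (k : ℕ) (hk : 2 ≤ k)
    (e : (ZMod (p ^ k))ˣ)
    (he : (e : ZMod (p ^ k)) = (p : ZMod (p ^ k)) ^ (k - 1) + 1) :
    {S : Set (ZMod (p ^ k)) | ∃ x : ZMod (p ^ k), S = coset (Subgroup.zpowers e) x}.ncard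
        = 2 * p ^ (k - 1) - p ^ (k - 2) ∧
      ∀ α : ZMod (p ^ k), α ≠ 0 →
        {x : ZMod (p ^ k) |
            coset (Subgroup.zpowers e) (x + α) = coset (Subgroup.zpowers e) x}.ncard
          ∈ ({0, p ^ k - p ^ (k - 1)} : Set ℕ) := by
  have he' : (e : ZMod (p ^ k)) = 1 + (p ^ (k - 1) : ℕ) := by rw [he]; push_cast; ring
  refine ⟨?_, fun α hα => ncard_setOf_coset_add_eq_coset hp hk he' hα⟩
  rw [← ncard_range_coset hp hk he']
  congr 1
  ext S
  exact exists_congr fun _ => eq_comm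
end

section
/- Let p₁ and p₂ be distinct primes and n = p₁·p₂. For i = 1, 2 let sᵢ, tᵢ be positive integers with sᵢ·tᵢ = pᵢ − 1 and let gᵢ be a primitive root modulo pᵢ. Let e ∈ Z_n be the element determined by e ≡ g₁^{t₁} (mod p₁) and e ≡ g₂^{t₂} (mod p₂), and let G be the cyclic subgroup of (Z_n)^× generated by e. Then for every α ∈ Z_n, the cardinality of the coset αG = {α·g : g ∈ G} equals 1 if α = 0, equals s₂ if α ≠ 0 and p₁ divides α, equals s₁ if α ≠ 0 and p₂ divides α, and equals lcm(s₁, s₂) if α is a unit (coprime to n). -/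
lemma coset_ncard' {n : ℕ} [NeZero n] (e : (ZMod n)ˣ) (α : ZMod n) (d : ℕ) (hd : 0 < d)
    (h2 : ∀ k : ℕ, α * (e : ZMod n) ^ k = α ↔ d ∣ k) :
    (coset (Subgroup.zpowers e) α).ncard = d := by
  have hper : ∀ q : ℕ, α * (e : ZMod n) ^ (d * q) = α := by
    intro q
    induction q with
    | zero => simp
    | succ q ih =>
      rw [Nat.mul_succ, pow_add, ← mul_assoc, ih]
      exact (h2 d).mpr dvd_rfl
  have hinj : ∀ i j : ℕ, i ≤ j → j < d → α * (e : ZMod n) ^ i = α * (e : ZMod n) ^ j → i = j := by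
    intro i j hij hjd h
    have h1 : α * (e : ZMod n) ^ (j - i) * (e : ZMod n) ^ i = α * (e : ZMod n) ^ i := by
      rw [mul_assoc, ← pow_add, Nat.sub_add_cancel hij, ← h]
    have h2' : α * (e : ZMod n) ^ (j - i) = α :=
      ((Units.isUnit e).pow i).mul_right_cancel h1
    have hdvd := (h2 _).mp h2'
    rcases Nat.eq_zero_or_pos (j - i) with h0 | h0
    · omega
    · exact absurd (Nat.le_of_dvd h0 hdvd) (by omega)
  have hset : coset (Subgroup.zpowers e) α
      = ↑((Finset.range d).image fun k => α * (e : ZMod n) ^ k) := by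
    ext y
    simp only [coset, Set.mem_setOf_eq, Finset.coe_image, Finset.coe_range, Set.mem_image,
      Set.mem_Iio]
    constructor
    · rintro ⟨g, hg, rfl⟩
      obtain ⟨m, hm⟩ := mem_powers_iff_mem_zpowers.mpr hg
      refine ⟨m % d, Nat.mod_lt _ hd, ?_⟩
      rw [← hm, Units.val_pow_eq_pow_val]
      conv_rhs => rw [← Nat.div_add_mod m d]
      rw [pow_add, ← mul_assoc, hper]
    · rintro ⟨k, _, rfl⟩
      exact ⟨e ^ k, Subgroup.pow_mem _ (Subgroup.mem_zpowers e) k,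
        by rw [Units.val_pow_eq_pow_val]⟩
  rw [hset, Set.ncard_coe_finset, Finset.card_image_of_injOn, Finset.card_range]
  intro i hi j hj hij
  simp only [Finset.coe_range, Set.mem_Iio] at hi hj
  rcases le_total i j with h | h
  · exact hinj i j h hj hij
  · exact (hinj j i h hi hij.symm).symm

lemma field_aux {p : ℕ} [Fact p.Prime] (a : ZMod p) (ha : a ≠ 0) (u : (ZMod p)ˣ) (k : ℕ) :
    a * (u : ZMod p) ^ k = a ↔ orderOf u ∣ k := by
  constructor
  · intro h
    have h1 : (u : ZMod p) ^ k = 1 := mul_left_cancel₀ ha (h.trans (mul_one a).symm)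
    exact orderOf_dvd_iff_pow_eq_one.mpr
      (Units.ext (by rwa [Units.val_pow_eq_pow_val, Units.val_one]))
  · intro h
    have h1 : (u : ZMod p) ^ k = 1 := by
      rw [← Units.val_pow_eq_pow_val, orderOf_dvd_iff_pow_eq_one.mp h, Units.val_one]
    rw [h1, mul_one]

theorem stmt_19 (p₁ p₂ : ℕ) (hp₁ : p₁.Prime) (hp₂ : p₂.Prime) (hne : p₁ ≠ p₂)
    (n : ℕ) (hn : n = p₁ * p₂)
    (s₁ t₁ s₂ t₂ : ℕ) (hs₁ : 0 < s₁) (ht₁ : 0 < t₁) (hs₂ : 0 < s₂) (ht₂ : 0 < t₂)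
    (hst₁ : s₁ * t₁ = p₁ - 1) (hst₂ : s₂ * t₂ = p₂ - 1)
    (g₁ : (ZMod p₁)ˣ) (hg₁ : ∀ v : (ZMod p₁)ˣ, v ∈ Subgroup.zpowers g₁)
    (g₂ : (ZMod p₂)ˣ) (hg₂ : ∀ v : (ZMod p₂)ˣ, v ∈ Subgroup.zpowers g₂)
    (e : (ZMod n)ˣ)
    (he₁ : ZMod.castHom (show p₁ ∣ n from ⟨p₂, hn⟩) (ZMod p₁) (e : ZMod n)
      = ((g₁ ^ t₁ : (ZMod p₁)ˣ) : ZMod p₁))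
    (he₂ : ZMod.castHom (show p₂ ∣ n by rw [hn]; exact dvd_mul_left p₂ p₁) (ZMod p₂)
        (e : ZMod n) = ((g₂ ^ t₂ : (ZMod p₂)ˣ) : ZMod p₂)) :
    ∀ α : ZMod n,
      (α = 0 → (coset (Subgroup.zpowers e) α).ncard = 1) ∧
      (α ≠ 0 → (p₁ : ZMod n) ∣ α → (coset (Subgroup.zpowers e) α).ncard = s₂) ∧
      (α ≠ 0 → (p₂ : ZMod n) ∣ α → (coset (Subgroup.zpowers e) α).ncard = s₁) ∧
      (IsUnit α → (coset (Subgroup.zpowers e) α).ncard = Nat.lcm s₁ s₂) := by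
  haveI : Fact p₁.Prime := ⟨hp₁⟩
  haveI : Fact p₂.Prime := ⟨hp₂⟩
  haveI : NeZero n := ⟨by rw [hn]; exact Nat.mul_ne_zero hp₁.pos.ne' hp₂.pos.ne'⟩
  set φ₁ := ZMod.castHom (show p₁ ∣ n from ⟨p₂, hn⟩) (ZMod p₁) with hφ₁
  set φ₂ := ZMod.castHom (show p₂ ∣ n by rw [hn]; exact dvd_mul_left p₂ p₁) (ZMod p₂) with hφ₂
  -- injectivity via kernels
  have hker : ∀ x : ZMod n, φ₁ x = 0 → φ₂ x = 0 → x = 0 := by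
    intro x h1 h2
    have hx : x = ((x.val : ℕ) : ZMod n) := (ZMod.natCast_zmod_val x).symm
    rw [hx, map_natCast] at h1 h2
    rw [ZMod.natCast_eq_zero_iff] at h1 h2
    have hcop : Nat.Coprime p₁ p₂ := (Nat.coprime_primes hp₁ hp₂).mpr hne
    have : n ∣ x.val := by
      have h3 := Nat.Coprime.mul_dvd_of_dvd_of_dvd hcop h1 h2
      rwa [← hn] at h3
    rw [hx, ZMod.natCast_eq_zero_iff]
    exact this
  have hinj : ∀ x y : ZMod n, φ₁ x = φ₁ y → φ₂ x = φ₂ y → x = y := by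
    intro x y h1 h2
    have := hker (x - y) (by rw [map_sub, h1, sub_self]) (by rw [map_sub, h2, sub_self])
    linear_combination this
  -- orders
  have hord₁ : orderOf (g₁ ^ t₁) = s₁ := by
    rw [orderOf_pow, orderOf_eq_card_of_forall_mem_zpowers hg₁, Nat.card_eq_fintype_card, ZMod.card_units, ← hst₁,
      Nat.gcd_eq_right (dvd_mul_left t₁ s₁), Nat.mul_div_cancel _ ht₁]
  have hord₂ : orderOf (g₂ ^ t₂) = s₂ := by
    rw [orderOf_pow, orderOf_eq_card_of_forall_mem_zpowers hg₂, Nat.card_eq_fintype_card, ZMod.card_units, ← hst₂,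
      Nat.gcd_eq_right (dvd_mul_left t₂ s₂), Nat.mul_div_cancel _ ht₂]
  intro α
  -- key equivalence
  have hcomp : ∀ k : ℕ, α * (e : ZMod n) ^ k = α ↔
      (φ₁ α * ((g₁ ^ t₁ : (ZMod p₁)ˣ) : ZMod p₁) ^ k = φ₁ α ∧
       φ₂ α * ((g₂ ^ t₂ : (ZMod p₂)ˣ) : ZMod p₂) ^ k = φ₂ α) := by
    intro k
    constructor
    · intro h
      constructor
      · have := congrArg φ₁ h
        rwa [map_mul, map_pow, he₁] at this
      · have := congrArg φ₂ h
        rwa [map_mul, map_pow, he₂] at this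
    · rintro ⟨h1, h2⟩
      apply hinj
      · rw [map_mul, map_pow, he₁]; exact h1
      · rw [map_mul, map_pow, he₂]; exact h2
  refine ⟨?_, ?_, ?_, ?_⟩
  · rintro rfl
    apply coset_ncard' e 0 1 one_pos
    intro k
    simp
  · intro hα hdvd
    have hα₁ : φ₁ α = 0 := by
      obtain ⟨c, rfl⟩ := hdvd
      rw [map_mul, map_natCast, ZMod.natCast_self, zero_mul]
    have hα₂ : φ₂ α ≠ 0 := fun h => hα (hker α hα₁ h)
    apply coset_ncard' e α s₂ hs₂
    intro k
    rw [hcomp k, ← hord₂, ← field_aux _ hα₂]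
    simp [hα₁]
  · intro hα hdvd
    have hα₂ : φ₂ α = 0 := by
      obtain ⟨c, rfl⟩ := hdvd
      rw [map_mul, map_natCast, ZMod.natCast_self, zero_mul]
    have hα₁ : φ₁ α ≠ 0 := fun h => hα (hker α h hα₂)
    apply coset_ncard' e α s₁ hs₁
    intro k
    rw [hcomp k, ← hord₁, ← field_aux _ hα₁]
    simp [hα₂]
  · intro hα
    have hα₁ : φ₁ α ≠ 0 := (hα.map φ₁).ne_zero
    have hα₂ : φ₂ α ≠ 0 := (hα.map φ₂).ne_zero
    apply coset_ncard' e α (Nat.lcm s₁ s₂) (Nat.lcm_pos hs₁ hs₂)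
    intro k
    rw [hcomp k, field_aux _ hα₁, field_aux _ hα₂, hord₁, hord₂, Nat.lcm_dvd_iff]
end
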